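/- arXiv:1003.5276 — 6 statements merged into one kernel-verified Lean document; each statement's English description precedes it below -/
import Mathlib

section
/- Let H ∈ (0,1) and define p¹(x,t) = 2 ∫₀^∞ g(x; s²) g(s; t^{2H}) ds. Then for all x ≠ 0 and t > 0, p¹ satisfies the third-order partial differential equation ∂p¹/∂t = −H t^{2H−1} ( 2 ∂²p¹/∂x² + x ∂³p¹/∂x³ ). -/
open Real Set MeasureTheory Filter Topology

/-- Centered Gaussian density with variance `v`:
`g(x; v) = (2πv)^{-1/2} exp(−x²/(2v))`. -/
noncomputable def gauss (x v : ℝ) : ℝ :=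
  (Real.sqrt (2 * Real.pi * v))⁻¹ * Real.exp (-x ^ 2 / (2 * v))

/-- Density of `J¹_F(t) = B¹_H(|B²_H(t)|^{1/H})`:
`p¹(x,t) = 2 ∫₀^∞ g(x; s²) g(s; t^{2H}) ds`. -/
noncomputable def densJ1 (H x t : ℝ) : ℝ :=
  2 * ∫ s in Set.Ioi (0 : ℝ), gauss x (s ^ 2) * gauss s (t ^ (2 * H))

/-! ### Elementary bounds -/

lemma aux_pow_le_exp (y : ℝ) (hy : 0 ≤ y) (k : ℕ) : (y / k) ^ k ≤ Real.exp y := by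
  rcases Nat.eq_zero_or_pos k with rfl | hk
  · simpa using Real.one_le_exp hy
  · have hk0 : (0:ℝ) < k := by exact_mod_cast hk
    have h0 : (0:ℝ) ≤ y / k := by positivity
    have h1 : y / k ≤ Real.exp (y / k) := by
      have := Real.add_one_le_exp (y / k); linarith
    calc (y / k) ^ k ≤ (Real.exp (y / k)) ^ k := pow_le_pow_left₀ h0 h1 k
      _ = Real.exp y := by
          rw [← Real.exp_nat_mul]
          congr 1
          field_simp

lemma pow_bound (c : ℝ) (hc : 0 < c) (m : ℕ) (s : ℝ) (hs : 0 < s) :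
    s ^ m * Real.exp (-(c * s ^ 2)) ≤ ((m : ℝ) / c) ^ m + 1 := by
  have hexp1 : Real.exp (-(c * s ^ 2)) ≤ 1 := by
    rw [← Real.exp_zero]; exact Real.exp_le_exp.2 (by nlinarith)
  rcases le_total s 1 with h1 | h1
  · have hsm : s ^ m ≤ 1 := pow_le_one₀ hs.le h1
    have : s ^ m * Real.exp (-(c * s ^ 2)) ≤ 1 := by
      calc s ^ m * Real.exp (-(c * s ^ 2)) ≤ 1 * 1 := by
            apply mul_le_mul hsm hexp1 (Real.exp_pos _).le zero_le_one
        _ = 1 := by ring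
    have h2 : (0:ℝ) ≤ ((m : ℝ) / c) ^ m := by positivity
    linarith
  · have key : (s ^ 2) ^ m ≤ ((m : ℝ) / c) ^ m * Real.exp (c * s ^ 2) := by
      have h := aux_pow_le_exp (c * s ^ 2) (by positivity) m
      rcases Nat.eq_zero_or_pos m with rfl | hm
      · simpa using (Real.one_le_exp (by positivity : (0:ℝ) ≤ c * s ^ 2))
      · have hm0 : (0:ℝ) < m := by exact_mod_cast hm
        calc (s ^ 2) ^ m = ((m : ℝ) / c) ^ m * (c * s ^ 2 / m) ^ m := by
              rw [← mul_pow]; congr 1; field_simp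
          _ ≤ ((m : ℝ) / c) ^ m * Real.exp (c * s ^ 2) := by
              apply mul_le_mul_of_nonneg_left h (by positivity)
    have hsm : s ^ m ≤ (s ^ 2) ^ m := by
      rw [← pow_mul]
      exact pow_le_pow_right₀ h1 (by omega)
    calc s ^ m * Real.exp (-(c * s ^ 2)) ≤ (s ^ 2) ^ m * Real.exp (-(c * s ^ 2)) := by
          apply mul_le_mul_of_nonneg_right hsm (Real.exp_pos _).le
      _ ≤ ((m : ℝ) / c) ^ m * Real.exp (c * s ^ 2) * Real.exp (-(c * s ^ 2)) := by
          apply mul_le_mul_of_nonneg_right key (Real.exp_pos _).le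
      _ = ((m : ℝ) / c) ^ m := by rw [mul_assoc, ← Real.exp_add]; simp
      _ ≤ ((m : ℝ) / c) ^ m + 1 := by linarith

lemma inv_bound (a : ℝ) (ha : 0 < a) (n : ℕ) (s : ℝ) (hs : 0 < s) :
    (s⁻¹) ^ n * Real.exp (-(a / s ^ 2)) ≤ ((n : ℝ) / a) ^ n + 1 := by
  have h : a / s ^ 2 = a * (s⁻¹) ^ 2 := by field_simp
  rw [h]
  exact pow_bound a ha n s⁻¹ (by positivity)

lemma exp_neg_div_le (a : ℝ) (ha : 0 < a) (k : ℕ) (s : ℝ) (hs : 0 < s) :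
    Real.exp (-(a / s ^ 2)) ≤ ((k : ℝ) / a) ^ k * s ^ (2 * k) := by
  rcases Nat.eq_zero_or_pos k with rfl | hk
  · simpa using (by rw [← Real.exp_zero]; exact Real.exp_le_exp.2 (neg_nonpos.2 (by positivity)) :
      Real.exp (-(a / s ^ 2)) ≤ 1)
  · have hk0 : (0:ℝ) < k := by exact_mod_cast hk
    have h := aux_pow_le_exp (a / s ^ 2) (by positivity) k
    have hpos : (0:ℝ) < (a / s ^ 2 / k) ^ k := by positivity
    rw [Real.exp_neg]
    calc (Real.exp (a / s ^ 2))⁻¹ ≤ ((a / s ^ 2 / k) ^ k)⁻¹ := by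
          apply inv_anti₀ hpos h
      _ = ((k : ℝ) / a) ^ k * s ^ (2 * k) := by
          rw [← inv_pow, show (a / s ^ 2 / (k:ℝ))⁻¹ = (k : ℝ) / a * s ^ 2 by field_simp,
            mul_pow, ← pow_mul, mul_comm 2 k]

lemma term_bound (a b : ℝ) (ha : 0 < a) (hb : 0 < b) (m n : ℕ) (s : ℝ) (hs : 0 < s) :
    s ^ m * (s⁻¹) ^ n * (Real.exp (-(a / s ^ 2)) * Real.exp (-(b * s ^ 2)))
      ≤ (((n : ℝ) / a) ^ n + 1) * (((m : ℝ) / (b / 2)) ^ m + 1) * Real.exp (-(b / 2 * s ^ 2)) := by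
  have hsplit : Real.exp (-(b * s ^ 2))
      = Real.exp (-(b / 2 * s ^ 2)) * Real.exp (-(b / 2 * s ^ 2)) := by
    rw [← Real.exp_add]; congr 1; ring
  rw [hsplit, show s ^ m * (s⁻¹) ^ n *
      (Real.exp (-(a / s ^ 2)) * (Real.exp (-(b / 2 * s ^ 2)) * Real.exp (-(b / 2 * s ^ 2))))
      = ((s⁻¹) ^ n * Real.exp (-(a / s ^ 2))) * (s ^ m * Real.exp (-(b / 2 * s ^ 2)))
        * Real.exp (-(b / 2 * s ^ 2)) by ring]
  have h1 := inv_bound a ha n s hs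
  have h2 := pow_bound (b / 2) (by positivity) m s hs
  have e2 : Real.exp (-(b / 2 * s ^ 2)) ≤ Real.exp (-(b / 2 * s ^ 2)) := le_refl _
  gcongr

lemma ball_facts (y₀ y : ℝ) (h : y ∈ Metric.ball y₀ (|y₀| / 2)) :
    y₀ ^ 2 / 4 ≤ y ^ 2 ∧ |y| ≤ 3 * |y₀| / 2 := by
  rw [Metric.mem_ball, Real.dist_eq] at h
  have h1 : |y₀| - |y| ≤ |y₀ - y| := abs_sub_abs_le_abs_sub y₀ y
  have h2 : |y₀ - y| = |y - y₀| := abs_sub_comm y₀ y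
  have h3 : |y₀| / 2 ≤ |y| := by rw [h2] at h1; linarith
  constructor
  · nlinarith [sq_abs y, sq_abs y₀, abs_nonneg y, abs_nonneg y₀]
  · have h4 : |y| - |y₀| ≤ |y - y₀| := abs_sub_abs_le_abs_sub y y₀
    linarith

/-! ### Basic facts about `gauss` -/

lemma gauss_nonneg (y w : ℝ) : 0 ≤ gauss y w := by
  unfold gauss; positivity

lemma gauss_sq_eq (y s : ℝ) (hs : 0 < s) :
    gauss y (s ^ 2) = (Real.sqrt (2 * Real.pi))⁻¹ * (s⁻¹ * Real.exp (-y ^ 2 / (2 * s ^ 2))) := by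
  unfold gauss
  rw [show (2 * Real.pi * s ^ 2) = (2 * Real.pi) * s ^ 2 by ring,
    Real.sqrt_mul (by positivity) (s ^ 2), Real.sqrt_sq hs.le, mul_inv]
  ring

lemma measurable_gauss_fst (y : ℝ) : Measurable (fun s : ℝ => gauss y (s ^ 2)) := by
  unfold gauss
  exact ((Real.continuous_sqrt.measurable.comp
      (measurable_const.mul (measurable_id.pow_const 2))).inv).mul
    (Real.measurable_exp.comp
      (measurable_const.div (measurable_const.mul (measurable_id.pow_const 2))))

lemma measurable_gauss_snd (v : ℝ) : Measurable (fun s : ℝ => gauss s v) := by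
  unfold gauss
  exact measurable_const.mul
    (Real.measurable_exp.comp (((measurable_id.pow_const 2).neg).div_const _))

lemma aesm_integrand (v y : ℝ) {r : ℝ → ℝ} (hr : Measurable r) :
    AEStronglyMeasurable (fun s => r s * gauss y (s ^ 2) * gauss s v)
      (volume.restrict (Ioi 0)) :=
  (((hr.mul (measurable_gauss_fst y)).mul (measurable_gauss_snd v))).aestronglyMeasurable

lemma hasDerivAt_gauss_fst (w : ℝ) (hw : 0 < w) (y : ℝ) :
    HasDerivAt (fun z => gauss z w) (-(y / w) * gauss y w) y := by
  have h1 : HasDerivAt (fun z : ℝ => -z ^ 2 / (2 * w)) (-(2 * y) / (2 * w)) y := by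
    simpa using ((hasDerivAt_pow 2 y).neg.div_const (2 * w))
  have h2 := (h1.exp).const_mul (Real.sqrt (2 * Real.pi * w))⁻¹
  have hfun : (fun z => gauss z w)
      = fun z => (Real.sqrt (2 * Real.pi * w))⁻¹ * Real.exp (-z ^ 2 / (2 * w)) := rfl
  rw [hfun]
  refine h2.congr_deriv (Eq.symm ?_)
  unfold gauss
  have hw0 : w ≠ 0 := ne_of_gt hw
  field_simp

lemma hasDerivAt_gauss_snd (s v : ℝ) (hv : 0 < v) :
    HasDerivAt (fun w => gauss s w) ((s ^ 2 - v) / (2 * v ^ 2) * gauss s v) v := by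
  have hsv : Real.sqrt v ≠ 0 := by positivity
  have hsvp : 0 < Real.sqrt v := Real.sqrt_pos.2 hv
  have hv0 : v ≠ 0 := ne_of_gt hv
  have hEq : (fun w => gauss s w) =ᶠ[𝓝 v]
      (fun w => (Real.sqrt (2 * Real.pi))⁻¹ * ((Real.sqrt w)⁻¹ * Real.exp (-s ^ 2 / (2 * w)))) := by
    filter_upwards [Ioi_mem_nhds hv] with w hw
    unfold gauss
    rw [Real.sqrt_mul (by positivity) w, mul_inv]
    ring
  have h1 : HasDerivAt (fun w : ℝ => (Real.sqrt w)⁻¹)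
      (-(1 / (2 * Real.sqrt v)) / Real.sqrt v ^ 2) v :=
    (Real.hasDerivAt_sqrt hv0).inv hsv
  have h2 : HasDerivAt (fun w : ℝ => Real.exp (-s ^ 2 / (2 * w)))
      (Real.exp (-s ^ 2 / (2 * v)) * (-s ^ 2 * (-2 / (2 * v) ^ 2))) v := by
    have hb : HasDerivAt (fun w : ℝ => 2 * w) 2 v := by
      simpa using (hasDerivAt_id v).const_mul (2:ℝ)
    have hinv : HasDerivAt (fun w : ℝ => (2 * w)⁻¹) (-2 / (2 * v) ^ 2) v :=
      hb.inv (by positivity)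
    have hin : HasDerivAt (fun w : ℝ => -s ^ 2 * (2 * w)⁻¹) (-s ^ 2 * (-2 / (2 * v) ^ 2)) v :=
      hinv.const_mul _
    have hin2 : HasDerivAt (fun w : ℝ => -s ^ 2 / (2 * w)) (-s ^ 2 * (-2 / (2 * v) ^ 2)) v := by
      simpa only [div_eq_mul_inv] using hin
    exact hin2.exp
  have h := ((h1.mul h2).const_mul (Real.sqrt (2 * Real.pi))⁻¹).congr_of_eventuallyEq hEq
  refine h.congr_deriv (Eq.symm ?_)
  unfold gauss
  rw [Real.sqrt_mul (by positivity) v, Real.sq_sqrt hv.le, mul_inv]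
  field_simp
  ring

/-! ### Integrability helpers -/

lemma integrable_of_le_exp {f : ℝ → ℝ}
    (hm : AEStronglyMeasurable f (volume.restrict (Ioi 0))) (c C : ℝ) (hc : 0 < c)
    (h : ∀ s ∈ Ioi (0:ℝ), |f s| ≤ C * Real.exp (-(c * s ^ 2))) :
    IntegrableOn f (Ioi 0) := by
  have hint : Integrable (fun s : ℝ => C * Real.exp (-(c * s ^ 2))) := by
    have := (integrable_exp_neg_mul_sq hc).const_mul C
    simpa using this
  apply Integrable.mono' hint.integrableOn hm
  rw [ae_restrict_iff' measurableSet_Ioi]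
  exact Eventually.of_forall (fun s hs => by simpa [Real.norm_eq_abs] using h s hs)

lemma gauss_snd_le (s v : ℝ) (hv : 0 < v) :
    gauss s v ≤ (Real.sqrt (2 * Real.pi * v))⁻¹ * Real.exp (-((2 * v)⁻¹ * s ^ 2)) := by
  unfold gauss
  apply le_of_eq
  congr 1
  congr 1
  ring

/-- bound on `(s⁻¹)^n * gauss y (s^2)` for `y` in a ball around `y₀ ≠ 0`. -/
lemma qg_bound (y₀ : ℝ) (hy₀ : y₀ ≠ 0) (y : ℝ) (hy : y ∈ Metric.ball y₀ (|y₀| / 2))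
    (s : ℝ) (hs : 0 < s) (n : ℕ) :
    (s⁻¹) ^ n * gauss y (s ^ 2)
      ≤ (Real.sqrt (2 * Real.pi))⁻¹ * ((((n:ℝ) + 1) / (y₀ ^ 2 / 8)) ^ (n + 1) + 1) := by
  have ha : 0 < y₀ ^ 2 / 8 := by positivity
  have h4 := (ball_facts y₀ y hy).1
  have hE : Real.exp (-y ^ 2 / (2 * s ^ 2)) ≤ Real.exp (-(y₀ ^ 2 / 8 / s ^ 2)) := by
    apply Real.exp_le_exp.2
    rw [neg_div, neg_le_neg_iff]
    rw [div_le_div_iff₀ (by positivity) (by positivity)]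
    nlinarith [sq_nonneg s]
  rw [gauss_sq_eq y s hs]
  have key : (s⁻¹) ^ (n + 1) * Real.exp (-(y₀ ^ 2 / 8 / s ^ 2))
      ≤ (((n:ℝ) + 1) / (y₀ ^ 2 / 8)) ^ (n + 1) + 1 := by
    have := inv_bound (y₀ ^ 2 / 8) ha (n + 1) s hs
    simpa using this
  calc (s⁻¹) ^ n * ((Real.sqrt (2 * Real.pi))⁻¹ * (s⁻¹ * Real.exp (-y ^ 2 / (2 * s ^ 2))))
      = (Real.sqrt (2 * Real.pi))⁻¹ * ((s⁻¹) ^ (n + 1) * Real.exp (-y ^ 2 / (2 * s ^ 2))) := by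
        ring
    _ ≤ (Real.sqrt (2 * Real.pi))⁻¹ * ((s⁻¹) ^ (n + 1) * Real.exp (-(y₀ ^ 2 / 8 / s ^ 2))) := by
        gcongr
    _ ≤ (Real.sqrt (2 * Real.pi))⁻¹ * ((((n:ℝ) + 1) / (y₀ ^ 2 / 8)) ^ (n + 1) + 1) := by
        gcongr

/-- The generic differentiation-under-the-integral lemma in the space variable. -/
lemma hasDerivAt_integral_x (v : ℝ) (hv : 0 < v) (x : ℝ) (hx : x ≠ 0)
    (p q : ℝ → ℝ → ℝ) (C : ℝ)
    (hmeas : ∀ y : ℝ, AEStronglyMeasurable (fun s => p y s * gauss y (s ^ 2) * gauss s v)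
      (volume.restrict (Ioi 0)))
    (hmeas' : AEStronglyMeasurable (fun s => q x s * gauss x (s ^ 2) * gauss s v)
      (volume.restrict (Ioi 0)))
    (hint : IntegrableOn (fun s => p x s * gauss x (s ^ 2) * gauss s v) (Ioi 0))
    (hderiv : ∀ s ∈ Ioi (0:ℝ), ∀ y : ℝ,
      HasDerivAt (fun z => p z s * gauss z (s ^ 2)) (q y s * gauss y (s ^ 2)) y)
    (hbd : ∀ s ∈ Ioi (0:ℝ), ∀ y ∈ Metric.ball x (|x| / 2),
      |q y s * gauss y (s ^ 2)| ≤ C) :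
    HasDerivAt (fun y => ∫ s in Ioi (0:ℝ), p y s * gauss y (s ^ 2) * gauss s v)
      (∫ s in Ioi (0:ℝ), q x s * gauss x (s ^ 2) * gauss s v) x ∧
    IntegrableOn (fun s => q x s * gauss x (s ^ 2) * gauss s v) (Ioi 0) := by
  have hC0 : 0 ≤ C :=
    le_trans (abs_nonneg _) (hbd 1 (by norm_num) x
      (Metric.mem_ball_self (by have := abs_pos.2 hx; linarith)))
  have hboundint : Integrable (fun s => C * gauss s v) (volume.restrict (Ioi 0)) := by
    apply integrable_of_le_exp (measurable_const.mul (measurable_gauss_snd v)).aestronglyMeasurable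
      ((2 * v)⁻¹) (C * (Real.sqrt (2 * Real.pi * v))⁻¹) (by positivity)
    intro s hs
    show |C * gauss s v| ≤ _
    rw [abs_of_nonneg (mul_nonneg hC0 (gauss_nonneg _ _))]
    calc C * gauss s v
          ≤ C * ((Real.sqrt (2 * Real.pi * v))⁻¹ * Real.exp (-((2 * v)⁻¹ * s ^ 2))) := by
            gcongr
            exact gauss_snd_le s v hv
        _ = C * (Real.sqrt (2 * Real.pi * v))⁻¹ * Real.exp (-((2 * v)⁻¹ * s ^ 2)) := by ring
  have h := hasDerivAt_integral_of_dominated_loc_of_deriv_le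
    (F := fun y s => p y s * gauss y (s ^ 2) * gauss s v)
    (F' := fun y s => q y s * gauss y (s ^ 2) * gauss s v)
    (x₀ := x) (bound := fun s => C * gauss s v)
    (Metric.ball_mem_nhds x (by have := abs_pos.2 hx; linarith : (0:ℝ) < |x| / 2))
    (Eventually.of_forall hmeas) hint hmeas' ?_ hboundint ?_
  · exact ⟨h.2, h.1⟩
  · rw [ae_restrict_iff' measurableSet_Ioi]
    apply Eventually.of_forall
    intro s hs y hy
    rw [Real.norm_eq_abs, abs_mul, abs_of_nonneg (gauss_nonneg s v)]
    exact mul_le_mul_of_nonneg_right (hbd s hs y hy) (gauss_nonneg s v)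
  · rw [ae_restrict_iff' measurableSet_Ioi]
    apply Eventually.of_forall
    intro s hs y _
    exact (hderiv s hs y).mul_const (gauss s v)

/-! ### The three space-derivative lemmas -/

lemma meas_q1 (y : ℝ) : Measurable (fun s : ℝ => -(y * (s⁻¹) ^ 2)) :=
  ((measurable_inv.pow_const 2).const_mul y).neg

lemma meas_q2 (y : ℝ) : Measurable (fun s : ℝ => y ^ 2 * (s⁻¹) ^ 4 - (s⁻¹) ^ 2) :=
  ((measurable_inv.pow_const 4).const_mul (y ^ 2)).sub (measurable_inv.pow_const 2)

lemma meas_q3 (y : ℝ) : Measurable (fun s : ℝ => 3 * y * (s⁻¹) ^ 4 - y ^ 3 * (s⁻¹) ^ 6) :=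
  ((measurable_inv.pow_const 4).const_mul (3 * y)).sub
    ((measurable_inv.pow_const 6).const_mul (y ^ 3))

lemma gauss_fst_le (y : ℝ) (hy : y ≠ 0) (s : ℝ) (hs : 0 < s) :
    gauss y (s ^ 2) ≤ (Real.sqrt (2 * Real.pi))⁻¹ * ((1 / (y ^ 2 / 2)) ^ 1 + 1) := by
  rw [gauss_sq_eq y s hs]
  have key := inv_bound (y ^ 2 / 2) (by positivity) 1 s hs
  have harg : -y ^ 2 / (2 * s ^ 2) = -(y ^ 2 / 2 / s ^ 2) := by ring
  rw [harg]
  calc (Real.sqrt (2 * Real.pi))⁻¹ * (s⁻¹ * Real.exp (-(y ^ 2 / 2 / s ^ 2)))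
      = (Real.sqrt (2 * Real.pi))⁻¹ * ((s⁻¹) ^ 1 * Real.exp (-(y ^ 2 / 2 / s ^ 2))) := by
        ring
    _ ≤ (Real.sqrt (2 * Real.pi))⁻¹ * ((((1:ℕ):ℝ) / (y ^ 2 / 2)) ^ 1 + 1) :=
        mul_le_mul_of_nonneg_left key (by positivity)
    _ = (Real.sqrt (2 * Real.pi))⁻¹ * ((1 / (y ^ 2 / 2)) ^ 1 + 1) := by norm_num

lemma int_gauss (v : ℝ) (hv : 0 < v) (y : ℝ) (hy : y ≠ 0) :
    IntegrableOn (fun s => gauss y (s ^ 2) * gauss s v) (Ioi 0) := by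
  apply integrable_of_le_exp ((measurable_gauss_fst y).mul
    (measurable_gauss_snd v)).aestronglyMeasurable ((2 * v)⁻¹)
    (((Real.sqrt (2 * Real.pi))⁻¹ * ((1 / (y ^ 2 / 2)) ^ 1 + 1)) *
      (Real.sqrt (2 * Real.pi * v))⁻¹) (by positivity)
  intro s hs
  have hs0 : (0:ℝ) < s := hs
  show |gauss y (s ^ 2) * gauss s v| ≤ _
  rw [abs_of_nonneg (mul_nonneg (gauss_nonneg _ _) (gauss_nonneg _ _))]
  have h1 : gauss y (s ^ 2)
      ≤ (Real.sqrt (2 * Real.pi))⁻¹ * ((1 / (y ^ 2 / 2)) ^ 1 + 1) := by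
    rw [gauss_sq_eq y s hs0]
    have key := inv_bound (y ^ 2 / 2) (by positivity) 1 s hs0
    have harg : -y ^ 2 / (2 * s ^ 2) = -(y ^ 2 / 2 / s ^ 2) := by ring
    rw [harg]
    calc (Real.sqrt (2 * Real.pi))⁻¹ * (s⁻¹ * Real.exp (-(y ^ 2 / 2 / s ^ 2)))
        = (Real.sqrt (2 * Real.pi))⁻¹ * ((s⁻¹) ^ 1 * Real.exp (-(y ^ 2 / 2 / s ^ 2))) := by
          ring
      _ ≤ (Real.sqrt (2 * Real.pi))⁻¹ * ((((1:ℕ):ℝ) / (y ^ 2 / 2)) ^ 1 + 1) :=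
          mul_le_mul_of_nonneg_left key (by positivity)
      _ = (Real.sqrt (2 * Real.pi))⁻¹ * ((1 / (y ^ 2 / 2)) ^ 1 + 1) := by norm_num
  calc gauss y (s ^ 2) * gauss s v
      ≤ ((Real.sqrt (2 * Real.pi))⁻¹ * ((1 / (y ^ 2 / 2)) ^ 1 + 1)) *
        ((Real.sqrt (2 * Real.pi * v))⁻¹ * Real.exp (-((2 * v)⁻¹ * s ^ 2))) := by
        apply mul_le_mul h1 (gauss_snd_le s v hv) (gauss_nonneg _ _) (by positivity)
    _ = ((Real.sqrt (2 * Real.pi))⁻¹ * ((1 / (y ^ 2 / 2)) ^ 1 + 1)) *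
        (Real.sqrt (2 * Real.pi * v))⁻¹ * Real.exp (-((2 * v)⁻¹ * s ^ 2)) := by ring

lemma L1 (v : ℝ) (hv : 0 < v) (y₀ : ℝ) (hy₀ : y₀ ≠ 0) :
    HasDerivAt (fun y => ∫ s in Ioi (0:ℝ), gauss y (s ^ 2) * gauss s v)
      (∫ s in Ioi (0:ℝ), -(y₀ * (s⁻¹) ^ 2) * gauss y₀ (s ^ 2) * gauss s v) y₀ ∧
    IntegrableOn (fun s => -(y₀ * (s⁻¹) ^ 2) * gauss y₀ (s ^ 2) * gauss s v) (Ioi 0) := by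
  have h := hasDerivAt_integral_x v hv y₀ hy₀ (fun _ _ => (1:ℝ))
    (fun y s => -(y * (s⁻¹) ^ 2))
    ((3 * |y₀| / 2) *
      ((Real.sqrt (2 * Real.pi))⁻¹ * (((((2:ℕ):ℝ) + 1) / (y₀ ^ 2 / 8)) ^ (2 + 1) + 1)))
    (fun y => by
      simpa using aesm_integrand v y (measurable_const : Measurable (fun _ : ℝ => (1:ℝ))))
    (aesm_integrand v y₀ (meas_q1 y₀))
    (by simpa using int_gauss v hv y₀ hy₀)
    ?_ ?_
  · constructor
    · have := h.1
      simpa using this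
    · exact h.2
  · intro s hs y
    have hs0 : (0:ℝ) < s := hs
    have hg := hasDerivAt_gauss_fst (s ^ 2) (by positivity) y
    have harg : -(y * (s⁻¹) ^ 2) = -(y / s ^ 2) := by field_simp
    simp only [one_mul]
    rw [harg]
    exact hg
  · intro s hs y hy
    have hs0 : (0:ℝ) < s := hs
    have hK := (ball_facts y₀ y hy).2
    have hqg := qg_bound y₀ hy₀ y hy s hs0 2
    rw [abs_mul, abs_neg, abs_mul, abs_of_nonneg (gauss_nonneg _ _),
      abs_pow, abs_inv, abs_of_pos hs0]
    calc |y| * (s⁻¹) ^ 2 * gauss y (s ^ 2)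
        = |y| * ((s⁻¹) ^ 2 * gauss y (s ^ 2)) := by ring
      _ ≤ (3 * |y₀| / 2) * ((s⁻¹) ^ 2 * gauss y (s ^ 2)) :=
          mul_le_mul_of_nonneg_right hK (mul_nonneg (by positivity) (gauss_nonneg _ _))
      _ ≤ (3 * |y₀| / 2) *
          ((Real.sqrt (2 * Real.pi))⁻¹ * (((((2:ℕ):ℝ) + 1) / (y₀ ^ 2 / 8)) ^ (2 + 1) + 1)) :=
          mul_le_mul_of_nonneg_left hqg (by positivity)

lemma L2 (v : ℝ) (hv : 0 < v) (y₀ : ℝ) (hy₀ : y₀ ≠ 0) :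
    HasDerivAt (fun y => ∫ s in Ioi (0:ℝ), -(y * (s⁻¹) ^ 2) * gauss y (s ^ 2) * gauss s v)
      (∫ s in Ioi (0:ℝ), (y₀ ^ 2 * (s⁻¹) ^ 4 - (s⁻¹) ^ 2) * gauss y₀ (s ^ 2) * gauss s v) y₀ ∧
    IntegrableOn (fun s => (y₀ ^ 2 * (s⁻¹) ^ 4 - (s⁻¹) ^ 2) * gauss y₀ (s ^ 2) * gauss s v)
      (Ioi 0) := by
  have B4 : ℝ := 0
  have h := hasDerivAt_integral_x v hv y₀ hy₀ (fun y s => -(y * (s⁻¹) ^ 2))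
    (fun y s => y ^ 2 * (s⁻¹) ^ 4 - (s⁻¹) ^ 2)
    ((3 * |y₀| / 2) ^ 2 *
        ((Real.sqrt (2 * Real.pi))⁻¹ * (((((4:ℕ):ℝ) + 1) / (y₀ ^ 2 / 8)) ^ (4 + 1) + 1))
      + (Real.sqrt (2 * Real.pi))⁻¹ * (((((2:ℕ):ℝ) + 1) / (y₀ ^ 2 / 8)) ^ (2 + 1) + 1))
    (fun y => aesm_integrand v y (meas_q1 y))
    (aesm_integrand v y₀ (meas_q2 y₀))
    (L1 v hv y₀ hy₀).2
    ?_ ?_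
  · exact h
  · intro s hs y
    have hs0 : (0:ℝ) < s := hs
    have hs' : s ≠ 0 := ne_of_gt hs0
    have hg := hasDerivAt_gauss_fst (s ^ 2) (by positivity) y
    have hq : HasDerivAt (fun z : ℝ => -(z * (s⁻¹) ^ 2)) (-(s⁻¹) ^ 2) y := by
      simpa only [one_mul, Pi.neg_def, id] using ((hasDerivAt_id y).mul_const ((s⁻¹) ^ 2)).neg
    have := hq.mul hg
    refine this.congr_deriv (Eq.symm ?_)
    field_simp
    ring
  · intro s hs y hy
    have hs0 : (0:ℝ) < s := hs
    have hK := (ball_facts y₀ y hy).2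
    have hy2 : y ^ 2 ≤ (3 * |y₀| / 2) ^ 2 := by
      rw [← sq_abs y]
      exact pow_le_pow_left₀ (abs_nonneg y) hK 2
    have h4 := qg_bound y₀ hy₀ y hy s hs0 4
    have h2 := qg_bound y₀ hy₀ y hy s hs0 2
    rw [abs_mul, abs_of_nonneg (gauss_nonneg _ _)]
    have hq : |y ^ 2 * (s⁻¹) ^ 4 - (s⁻¹) ^ 2| ≤ y ^ 2 * (s⁻¹) ^ 4 + (s⁻¹) ^ 2 := by
      refine le_trans (abs_sub _ _) ?_
      rw [abs_of_nonneg (by positivity), abs_of_nonneg (by positivity)]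
    calc |y ^ 2 * (s⁻¹) ^ 4 - (s⁻¹) ^ 2| * gauss y (s ^ 2)
        ≤ (y ^ 2 * (s⁻¹) ^ 4 + (s⁻¹) ^ 2) * gauss y (s ^ 2) :=
          mul_le_mul_of_nonneg_right hq (gauss_nonneg _ _)
      _ = y ^ 2 * ((s⁻¹) ^ 4 * gauss y (s ^ 2)) + (s⁻¹) ^ 2 * gauss y (s ^ 2) := by ring
      _ ≤ (3 * |y₀| / 2) ^ 2 *
            ((Real.sqrt (2 * Real.pi))⁻¹ * (((((4:ℕ):ℝ) + 1) / (y₀ ^ 2 / 8)) ^ (4 + 1) + 1))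
          + (Real.sqrt (2 * Real.pi))⁻¹ * (((((2:ℕ):ℝ) + 1) / (y₀ ^ 2 / 8)) ^ (2 + 1) + 1) := by
          apply add_le_add
          · apply mul_le_mul hy2 h4 (mul_nonneg (by positivity) (gauss_nonneg _ _)) (by positivity)
          · exact h2

lemma L3 (v : ℝ) (hv : 0 < v) (y₀ : ℝ) (hy₀ : y₀ ≠ 0) :
    HasDerivAt
      (fun y => ∫ s in Ioi (0:ℝ), (y ^ 2 * (s⁻¹) ^ 4 - (s⁻¹) ^ 2) * gauss y (s ^ 2) * gauss s v)
      (∫ s in Ioi (0:ℝ), (3 * y₀ * (s⁻¹) ^ 4 - y₀ ^ 3 * (s⁻¹) ^ 6) * gauss y₀ (s ^ 2) * gauss s v)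
      y₀ ∧
    IntegrableOn
      (fun s => (3 * y₀ * (s⁻¹) ^ 4 - y₀ ^ 3 * (s⁻¹) ^ 6) * gauss y₀ (s ^ 2) * gauss s v)
      (Ioi 0) := by
  have h := hasDerivAt_integral_x v hv y₀ hy₀
    (fun y s => y ^ 2 * (s⁻¹) ^ 4 - (s⁻¹) ^ 2)
    (fun y s => 3 * y * (s⁻¹) ^ 4 - y ^ 3 * (s⁻¹) ^ 6)
    (3 * (3 * |y₀| / 2) *
        ((Real.sqrt (2 * Real.pi))⁻¹ * (((((4:ℕ):ℝ) + 1) / (y₀ ^ 2 / 8)) ^ (4 + 1) + 1))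
      + (3 * |y₀| / 2) ^ 3 *
        ((Real.sqrt (2 * Real.pi))⁻¹ * (((((6:ℕ):ℝ) + 1) / (y₀ ^ 2 / 8)) ^ (6 + 1) + 1)))
    (fun y => aesm_integrand v y (meas_q2 y))
    (aesm_integrand v y₀ (meas_q3 y₀))
    (L2 v hv y₀ hy₀).2
    ?_ ?_
  · exact h
  · intro s hs y
    have hs0 : (0:ℝ) < s := hs
    have hs' : s ≠ 0 := ne_of_gt hs0
    have hg := hasDerivAt_gauss_fst (s ^ 2) (by positivity) y
    have hq : HasDerivAt (fun z : ℝ => z ^ 2 * (s⁻¹) ^ 4 - (s⁻¹) ^ 2)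
        (2 * y * (s⁻¹) ^ 4) y := by
      have h' := ((hasDerivAt_pow 2 y).mul_const ((s⁻¹) ^ 4)).sub_const ((s⁻¹) ^ 2)
      refine h'.congr_deriv (Eq.symm ?_)
      push_cast
      ring
    have := hq.mul hg
    refine this.congr_deriv (Eq.symm ?_)
    field_simp
    ring
  · intro s hs y hy
    have hs0 : (0:ℝ) < s := hs
    have hK := (ball_facts y₀ y hy).2
    have hy3 : |y| ^ 3 ≤ (3 * |y₀| / 2) ^ 3 := pow_le_pow_left₀ (abs_nonneg y) hK 3
    have h4 := qg_bound y₀ hy₀ y hy s hs0 4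
    have h6 := qg_bound y₀ hy₀ y hy s hs0 6
    rw [abs_mul, abs_of_nonneg (gauss_nonneg _ _)]
    have hq : |3 * y * (s⁻¹) ^ 4 - y ^ 3 * (s⁻¹) ^ 6|
        ≤ 3 * |y| * (s⁻¹) ^ 4 + |y| ^ 3 * (s⁻¹) ^ 6 := by
      refine le_trans (abs_sub _ _) ?_
      rw [abs_mul, abs_mul, abs_mul, abs_pow, abs_pow, abs_pow]
      rw [abs_inv, abs_of_pos hs0]
      norm_num
    calc |3 * y * (s⁻¹) ^ 4 - y ^ 3 * (s⁻¹) ^ 6| * gauss y (s ^ 2)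
        ≤ (3 * |y| * (s⁻¹) ^ 4 + |y| ^ 3 * (s⁻¹) ^ 6) * gauss y (s ^ 2) :=
          mul_le_mul_of_nonneg_right hq (gauss_nonneg _ _)
      _ = 3 * |y| * ((s⁻¹) ^ 4 * gauss y (s ^ 2)) + |y| ^ 3 * ((s⁻¹) ^ 6 * gauss y (s ^ 2)) := by
          ring
      _ ≤ 3 * (3 * |y₀| / 2) *
            ((Real.sqrt (2 * Real.pi))⁻¹ * (((((4:ℕ):ℝ) + 1) / (y₀ ^ 2 / 8)) ^ (4 + 1) + 1))
          + (3 * |y₀| / 2) ^ 3 *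
            ((Real.sqrt (2 * Real.pi))⁻¹ * (((((6:ℕ):ℝ) + 1) / (y₀ ^ 2 / 8)) ^ (6 + 1) + 1)) := by
          apply add_le_add
          · apply mul_le_mul (by linarith) h4 (mul_nonneg (by positivity) (gauss_nonneg _ _))
              (by positivity)
          · apply mul_le_mul hy3 h6 (mul_nonneg (by positivity) (gauss_nonneg _ _)) (by positivity)

/-! ### Derivative in time -/

set_option maxHeartbeats 1000000 in
lemma Lt (H x t : ℝ) (hH : 0 < H) (hx : x ≠ 0) (ht : 0 < t) :
    HasDerivAt (fun τ => densJ1 H x τ)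
      (2 * ((H * t ^ (2 * H - 1)) *
        ∫ s in Ioi (0:ℝ), ((s ^ 2 - t ^ (2 * H)) * ((t ^ (2 * H))⁻¹) ^ 2) *
          gauss x (s ^ 2) * gauss s (t ^ (2 * H)))) t ∧
    IntegrableOn (fun s => ((s ^ 2 - t ^ (2 * H)) * ((t ^ (2 * H))⁻¹) ^ 2) *
      gauss x (s ^ 2) * gauss s (t ^ (2 * H))) (Ioi 0) := by
  have hv : 0 < t ^ (2 * H) := Real.rpow_pos_of_pos ht _
  have ht2 : (0:ℝ) < t / 2 := by linarith
  have hv₁ : 0 < (t / 2) ^ (2 * H) := Real.rpow_pos_of_pos ht2 _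
  have hv₂ : 0 < (3 * t / 2) ^ (2 * H) := Real.rpow_pos_of_pos (by linarith) _
  set v₁ : ℝ := (t / 2) ^ (2 * H) with hv₁def
  set v₂ : ℝ := (3 * t / 2) ^ (2 * H) with hv₂def
  set Cx : ℝ := (Real.sqrt (2 * Real.pi))⁻¹ * ((1 / (x ^ 2 / 2)) ^ 1 + 1) with hCxdef
  have hCx : 0 < Cx := by rw [hCxdef]; positivity
  set c2 : ℝ := (4 * v₂)⁻¹ with hc2def
  have hc2 : 0 < c2 := by rw [hc2def]; positivity
  set CC : ℝ := (H * (v₂ / (t / 2))) * (v₁⁻¹) ^ 2 * Cx * (Real.sqrt (2 * Real.pi * v₁))⁻¹ *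
    ((((2:ℕ):ℝ) / c2) ^ 2 + 1 + v₂) with hCCdef
  have h := hasDerivAt_integral_of_dominated_loc_of_deriv_le
    (F := fun τ s => gauss x (s ^ 2) * gauss s (τ ^ (2 * H)))
    (F' := fun τ s => (H * τ ^ (2 * H - 1)) * (((s ^ 2 - τ ^ (2 * H)) * ((τ ^ (2 * H))⁻¹) ^ 2) *
      gauss x (s ^ 2) * gauss s (τ ^ (2 * H))))
    (x₀ := t) (bound := fun s => CC * Real.exp (-(c2 * s ^ 2)))
    (Metric.ball_mem_nhds t (show (0:ℝ) < t / 2 from ht2))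
    (Eventually.of_forall (fun τ =>
      ((measurable_gauss_fst x).mul (measurable_gauss_snd _)).aestronglyMeasurable))
    (int_gauss _ hv x hx)
    ((measurable_const.mul (((((measurable_id.pow_const 2).sub_const _).mul_const _).mul
      (measurable_gauss_fst x)).mul (measurable_gauss_snd _))).aestronglyMeasurable)
    ?_ (by simpa only [neg_mul, IntegrableOn] using (((integrable_exp_neg_mul_sq hc2).const_mul CC).integrableOn (s := Ioi 0))) ?_
  · have hne : H * t ^ (2 * H - 1) ≠ 0 :=
      ne_of_gt (mul_pos hH (Real.rpow_pos_of_pos ht _))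
    constructor
    · have hDeriv := h.2.const_mul 2
      have heq : (∫ s in Ioi (0:ℝ), (H * t ^ (2 * H - 1)) *
          (((s ^ 2 - t ^ (2 * H)) * ((t ^ (2 * H))⁻¹) ^ 2) *
            gauss x (s ^ 2) * gauss s (t ^ (2 * H))))
          = (H * t ^ (2 * H - 1)) * ∫ s in Ioi (0:ℝ),
            ((s ^ 2 - t ^ (2 * H)) * ((t ^ (2 * H))⁻¹) ^ 2) *
              gauss x (s ^ 2) * gauss s (t ^ (2 * H)) :=
        MeasureTheory.integral_const_mul _ _
      rw [heq] at hDeriv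
      exact hDeriv
    · have h2 := h.1.const_mul (H * t ^ (2 * H - 1))⁻¹
      have heq : (fun s => (H * t ^ (2 * H - 1))⁻¹ * ((H * t ^ (2 * H - 1)) *
          (((s ^ 2 - t ^ (2 * H)) * ((t ^ (2 * H))⁻¹) ^ 2) *
            gauss x (s ^ 2) * gauss s (t ^ (2 * H)))))
          = fun s => ((s ^ 2 - t ^ (2 * H)) * ((t ^ (2 * H))⁻¹) ^ 2) *
            gauss x (s ^ 2) * gauss s (t ^ (2 * H)) := by
        funext s; rw [inv_mul_cancel_left₀ hne]
      rwa [heq] at h2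
  · -- bound
    rw [ae_restrict_iff' measurableSet_Ioi]
    apply Eventually.of_forall
    intro s hs τ hτ
    have hs0 : (0:ℝ) < s := hs
    rw [Metric.mem_ball, Real.dist_eq, abs_sub_lt_iff] at hτ
    have hτ1 : t / 2 < τ := by linarith [hτ.1, hτ.2]
    have hτ0 : 0 < τ := lt_trans ht2 hτ1
    have hτ2 : τ ≤ 3 * t / 2 := by linarith [hτ.1]
    have hw : 0 < τ ^ (2 * H) := Real.rpow_pos_of_pos hτ0 _
    have hw₁ : v₁ ≤ τ ^ (2 * H) :=
      Real.rpow_le_rpow ht2.le hτ1.le (by positivity)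
    have hw₂ : τ ^ (2 * H) ≤ v₂ :=
      Real.rpow_le_rpow hτ0.le hτ2 (by positivity)
    have hτb : τ ^ (2 * H - 1) ≤ v₂ / (t / 2) := by
      rw [Real.rpow_sub hτ0, Real.rpow_one]
      exact div_le_div₀ hv₂.le hw₂ ht2 hτ1.le
    have habs : |s ^ 2 - τ ^ (2 * H)| ≤ s ^ 2 + v₂ :=
      abs_le.2 ⟨by nlinarith, by nlinarith⟩
    have hinv : ((τ ^ (2 * H))⁻¹) ^ 2 ≤ (v₁⁻¹) ^ 2 :=
      pow_le_pow_left₀ (by positivity) (inv_anti₀ hv₁ hw₁) 2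
    have hgx : gauss x (s ^ 2) ≤ Cx := gauss_fst_le x hx s hs0
    have hgs : gauss s (τ ^ (2 * H)) ≤ (Real.sqrt (2 * Real.pi * v₁))⁻¹ *
        Real.exp (-((2 * v₂)⁻¹ * s ^ 2)) := by
      unfold gauss
      apply mul_le_mul
      · apply inv_anti₀ (Real.sqrt_pos.2 (by positivity))
        apply Real.sqrt_le_sqrt
        nlinarith [Real.pi_pos]
      · apply Real.exp_le_exp.2
        have harg : -((2 * v₂)⁻¹ * s ^ 2) = -(s ^ 2 / (2 * v₂)) := by ring
        rw [neg_div, harg, neg_le_neg_iff, div_le_div_iff₀ (by linarith) (by linarith)]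
        nlinarith [sq_nonneg s]
      · exact (Real.exp_pos _).le
      · positivity
    have hpos1 : 0 < H * τ ^ (2 * H - 1) := mul_pos hH (Real.rpow_pos_of_pos hτ0 _)
    simp only [Real.norm_eq_abs, abs_mul]
    rw [abs_of_pos hH, abs_of_pos (Real.rpow_pos_of_pos hτ0 (2 * H - 1)),
      abs_of_nonneg (show (0:ℝ) ≤ ((τ ^ (2 * H))⁻¹) ^ 2 by positivity),
      abs_of_nonneg (gauss_nonneg x (s ^ 2)),
      abs_of_nonneg (gauss_nonneg s (τ ^ (2 * H)))]
    have step1 : H * τ ^ (2 * H - 1) *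
        (|s ^ 2 - τ ^ (2 * H)| * ((τ ^ (2 * H))⁻¹) ^ 2 * gauss x (s ^ 2) *
          gauss s (τ ^ (2 * H)))
        ≤ (H * (v₂ / (t / 2))) * ((s ^ 2 + v₂) * (v₁⁻¹) ^ 2 * Cx *
          ((Real.sqrt (2 * Real.pi * v₁))⁻¹ * Real.exp (-((2 * v₂)⁻¹ * s ^ 2)))) := by
      have hg1 : 0 ≤ gauss x (s ^ 2) := gauss_nonneg _ _
      have hg2 : 0 ≤ gauss s (τ ^ (2 * H)) := gauss_nonneg _ _
      have hsv2 : (0:ℝ) ≤ s ^ 2 + v₂ := by nlinarith [sq_nonneg s]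
      have hv1i : (0:ℝ) ≤ (v₁⁻¹) ^ 2 := by positivity
      have hwi : (0:ℝ) ≤ ((τ ^ (2 * H))⁻¹) ^ 2 := by positivity
      apply mul_le_mul
      · exact mul_le_mul_of_nonneg_left hτb hH.le
      · apply mul_le_mul
        · apply mul_le_mul
          · exact mul_le_mul habs hinv hwi hsv2
          · exact hgx
          · exact hg1
          · exact mul_nonneg hsv2 hv1i
        · exact hgs
        · exact hg2
        · exact mul_nonneg (mul_nonneg hsv2 hv1i) hCx.le
      · exact mul_nonneg (mul_nonneg (mul_nonneg (abs_nonneg _) hwi) hg1) hg2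
      · exact mul_nonneg hH.le (div_nonneg hv₂.le ht2.le)
    refine le_trans step1 ?_
    have hsplit : Real.exp (-((2 * v₂)⁻¹ * s ^ 2))
        = Real.exp (-(c2 * s ^ 2)) * Real.exp (-(c2 * s ^ 2)) := by
      rw [← Real.exp_add]
      congr 1
      rw [hc2def]
      field_simp
      ring
    have hsv : (s ^ 2 + v₂) * Real.exp (-(c2 * s ^ 2)) ≤ (((2:ℕ):ℝ) / c2) ^ 2 + 1 + v₂ := by
      have h1 := pow_bound c2 hc2 2 s hs0
      have h2 : Real.exp (-(c2 * s ^ 2)) ≤ 1 := by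
        rw [← Real.exp_zero]
        exact Real.exp_le_exp.2 (neg_nonpos.2 (by positivity))
      have h3 : v₂ * Real.exp (-(c2 * s ^ 2)) ≤ v₂ * 1 :=
        mul_le_mul_of_nonneg_left h2 hv₂.le
      calc (s ^ 2 + v₂) * Real.exp (-(c2 * s ^ 2))
          = s ^ 2 * Real.exp (-(c2 * s ^ 2)) + v₂ * Real.exp (-(c2 * s ^ 2)) := by ring
        _ ≤ ((((2:ℕ):ℝ)) / c2) ^ 2 + 1 + v₂ * 1 := by
            apply add_le_add h1 h3
        _ = (((2:ℕ):ℝ) / c2) ^ 2 + 1 + v₂ := by ring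
    calc (H * (v₂ / (t / 2))) * ((s ^ 2 + v₂) * (v₁⁻¹) ^ 2 * Cx *
          ((Real.sqrt (2 * Real.pi * v₁))⁻¹ * Real.exp (-((2 * v₂)⁻¹ * s ^ 2))))
        = (H * (v₂ / (t / 2))) * (v₁⁻¹) ^ 2 * Cx * (Real.sqrt (2 * Real.pi * v₁))⁻¹ *
          ((s ^ 2 + v₂) * Real.exp (-(c2 * s ^ 2))) * Real.exp (-(c2 * s ^ 2)) := by
          rw [hsplit]; ring
      _ ≤ (H * (v₂ / (t / 2))) * (v₁⁻¹) ^ 2 * Cx * (Real.sqrt (2 * Real.pi * v₁))⁻¹ *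
          ((((2:ℕ):ℝ) / c2) ^ 2 + 1 + v₂) * Real.exp (-(c2 * s ^ 2)) := by
          apply mul_le_mul_of_nonneg_right _ (Real.exp_pos _).le
          apply mul_le_mul_of_nonneg_left hsv
          have := hCx
          positivity
      _ = CC * Real.exp (-(c2 * s ^ 2)) := by rw [hCCdef]
  · -- differentiability
    rw [ae_restrict_iff' measurableSet_Ioi]
    apply Eventually.of_forall
    intro s hs τ hτ
    rw [Metric.mem_ball, Real.dist_eq, abs_sub_lt_iff] at hτ
    have hτ1 : t / 2 < τ := by linarith [hτ.1, hτ.2]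
    have hτ0 : 0 < τ := lt_trans ht2 hτ1
    have hw : 0 < τ ^ (2 * H) := Real.rpow_pos_of_pos hτ0 _
    have hrpow : HasDerivAt (fun u : ℝ => u ^ (2 * H)) (2 * H * τ ^ (2 * H - 1)) τ :=
      Real.hasDerivAt_rpow_const (Or.inl (ne_of_gt hτ0))
    have hg := hasDerivAt_gauss_snd s (τ ^ (2 * H)) hw
    have hcomp : HasDerivAt (fun u : ℝ => gauss s (u ^ (2 * H)))
        ((s ^ 2 - τ ^ (2 * H)) / (2 * (τ ^ (2 * H)) ^ 2) * gauss s (τ ^ (2 * H)) *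
          (2 * H * τ ^ (2 * H - 1))) τ := by have h' := hg.comp τ hrpow; exact h'
    have hfull := hcomp.const_mul (gauss x (s ^ 2))
    refine hfull.congr_deriv (Eq.symm ?_)
    have hwne : τ ^ (2 * H) ≠ 0 := ne_of_gt hw
    field_simp

/-! ### The key integral identity -/

set_option maxHeartbeats 2000000 in
lemma key_integral (v : ℝ) (hv : 0 < v) (x : ℝ) (hx : x ≠ 0)
    (hint1 : IntegrableOn (fun s => ((s ^ 2 - v) * (v⁻¹) ^ 2) *
      gauss x (s ^ 2) * gauss s v) (Ioi 0))
    (hint2 : IntegrableOn (fun s => (x ^ 2 * (s⁻¹) ^ 4 - (s⁻¹) ^ 2) *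
      gauss x (s ^ 2) * gauss s v) (Ioi 0))
    (hint3 : IntegrableOn (fun s => (3 * x * (s⁻¹) ^ 4 - x ^ 3 * (s⁻¹) ^ 6) *
      gauss x (s ^ 2) * gauss s v) (Ioi 0)) :
    (∫ s in Ioi (0:ℝ), ((s ^ 2 - v) * (v⁻¹) ^ 2) * gauss x (s ^ 2) * gauss s v)
      + (2 * ∫ s in Ioi (0:ℝ), (x ^ 2 * (s⁻¹) ^ 4 - (s⁻¹) ^ 2) * gauss x (s ^ 2) * gauss s v)
      + (x * ∫ s in Ioi (0:ℝ), (3 * x * (s⁻¹) ^ 4 - x ^ 3 * (s⁻¹) ^ 6) *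
          gauss x (s ^ 2) * gauss s v) = 0 := by
  have hv0 : v ≠ 0 := ne_of_gt hv
  have ha : (0:ℝ) < x ^ 2 / 2 := by positivity
  have hWint : IntegrableOn (fun s =>
      ((s ^ 2 - v) * (v⁻¹) ^ 2) * gauss x (s ^ 2) * gauss s v
      + (2 * ((x ^ 2 * (s⁻¹) ^ 4 - (s⁻¹) ^ 2) * gauss x (s ^ 2) * gauss s v)
        + x * ((3 * x * (s⁻¹) ^ 4 - x ^ 3 * (s⁻¹) ^ 6) * gauss x (s ^ 2) * gauss s v)))
      (Ioi 0) :=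
    hint1.add ((hint2.const_mul 2).add (hint3.const_mul x))
  have hWzero : (∫ s in Ioi (0:ℝ),
      (((s ^ 2 - v) * (v⁻¹) ^ 2) * gauss x (s ^ 2) * gauss s v
      + (2 * ((x ^ 2 * (s⁻¹) ^ 4 - (s⁻¹) ^ 2) * gauss x (s ^ 2) * gauss s v)
        + x * ((3 * x * (s⁻¹) ^ 4 - x ^ 3 * (s⁻¹) ^ 6) * gauss x (s ^ 2) * gauss s v)))) = 0 := by
    set c₀ : ℝ := (Real.sqrt (2 * Real.pi))⁻¹ * (Real.sqrt (2 * Real.pi * v))⁻¹ with hc₀def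
    have hc₀ : 0 < c₀ := by rw [hc₀def]; positivity
    set E : ℝ → ℝ := fun u => if u ≤ 0 then 0 else
      c₀ * (Real.exp (-x ^ 2 / (2 * u ^ 2) - u ^ 2 / (2 * v)) *
        ((u⁻¹) ^ 2 - x ^ 2 * (u⁻¹) ^ 4 - v⁻¹)) with hEdef
    have hE0 : E 0 = 0 := by rw [hEdef]; norm_num
    -- derivative of E equals the integrand on (0, ∞)
    have hderiv : ∀ s ∈ Ioi (0:ℝ),
        HasDerivAt E
          (((s ^ 2 - v) * (v⁻¹) ^ 2) * gauss x (s ^ 2) * gauss s v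
          + (2 * ((x ^ 2 * (s⁻¹) ^ 4 - (s⁻¹) ^ 2) * gauss x (s ^ 2) * gauss s v)
            + x * ((3 * x * (s⁻¹) ^ 4 - x ^ 3 * (s⁻¹) ^ 6) * gauss x (s ^ 2) * gauss s v))) s := by
      intro s hs
      have hs0 : (0:ℝ) < s := hs
      have hs' : s ≠ 0 := ne_of_gt hs0
      have hEeq : E =ᶠ[𝓝 s] (fun u => c₀ *
          (Real.exp (-x ^ 2 / (2 * u ^ 2) - u ^ 2 / (2 * v)) *
            ((u⁻¹) ^ 2 - x ^ 2 * (u⁻¹) ^ 4 - v⁻¹))) := by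
        filter_upwards [Ioi_mem_nhds hs0] with u hu
        rw [hEdef]
        simp [not_le.2 (show (0:ℝ) < u from hu)]
      have h2s : (2 * s ^ 2 : ℝ) ≠ 0 := by positivity
      have hu1 : HasDerivAt (fun u : ℝ => -x ^ 2 / (2 * u ^ 2))
          (-x ^ 2 * (-(2 * (2 * s ^ 1)) / (2 * s ^ 2) ^ 2)) s := by
        have hb : HasDerivAt (fun u : ℝ => 2 * u ^ 2) (2 * (2 * s ^ 1)) s :=
          (hasDerivAt_pow 2 s).const_mul 2
        have hbi := (hb.inv h2s).const_mul (-x ^ 2 : ℝ)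
        simpa only [div_eq_mul_inv, Pi.inv_apply] using hbi
      have hu2 : HasDerivAt (fun u : ℝ => u ^ 2 / (2 * v)) ((2 * s ^ 1) / (2 * v)) s := by
        have := (hasDerivAt_pow 2 s).div_const (2 * v)
        simpa using this
      have hexp := (hu1.sub hu2).exp
      have hi1 : HasDerivAt (fun u : ℝ => (u⁻¹) ^ 2)
          ((2:ℕ) * (s⁻¹) ^ 1 * -(s ^ 2)⁻¹) s := (hasDerivAt_inv hs').pow 2
      have hi2 : HasDerivAt (fun u : ℝ => x ^ 2 * (u⁻¹) ^ 4)
          (x ^ 2 * ((4:ℕ) * (s⁻¹) ^ 3 * -(s ^ 2)⁻¹)) s :=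
        ((hasDerivAt_inv hs').pow 4).const_mul (x ^ 2)
      have hQ := (hi1.sub hi2).sub_const v⁻¹
      have hsm := (hexp.mul hQ).const_mul c₀
      have hfin := hsm.congr_of_eventuallyEq hEeq
      refine hfin.congr_deriv (Eq.symm ?_)
      rw [gauss_sq_eq x s hs0]
      rw [show gauss s v = (Real.sqrt (2 * Real.pi * v))⁻¹ * Real.exp (-s ^ 2 / (2 * v))
        from rfl]
      simp only [Pi.sub_apply]
      rw [show (-x ^ 2 / (2 * s ^ 2) - s ^ 2 / (2 * v))
        = (-x ^ 2 / (2 * s ^ 2)) + (-s ^ 2 / (2 * v)) by ring, Real.exp_add, hc₀def]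
      field_simp
      ring
    -- continuity at 0 from the right
    have hcont : ContinuousWithinAt E (Ici 0) 0 := by
      rw [ContinuousWithinAt, hE0]
      have hC2 : ∀ u : ℝ, 0 < u → |E u| ≤
          (c₀ * (((2:ℝ) / (x ^ 2 / 2)) ^ 2 + x ^ 2 * ((3:ℝ) / (x ^ 2 / 2)) ^ 3 +
            v⁻¹ * ((1:ℝ) / (x ^ 2 / 2)))) * u ^ 2 := by
        intro u hu
        have hu' : u ≠ 0 := ne_of_gt hu
        have he2 : Real.exp (-(x ^ 2 / 2 / u ^ 2)) * (u⁻¹) ^ 2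
            ≤ ((2:ℝ) / (x ^ 2 / 2)) ^ 2 * u ^ 2 := by
          have h := exp_neg_div_le (x ^ 2 / 2) ha 2 u hu
          calc Real.exp (-(x ^ 2 / 2 / u ^ 2)) * (u⁻¹) ^ 2
              ≤ (((2:ℕ):ℝ) / (x ^ 2 / 2)) ^ 2 * u ^ (2 * 2) * (u⁻¹) ^ 2 :=
                mul_le_mul_of_nonneg_right h (by positivity)
            _ = ((2:ℝ) / (x ^ 2 / 2)) ^ 2 * u ^ 2 := by
                push_cast
                field_simp
        have he4 : Real.exp (-(x ^ 2 / 2 / u ^ 2)) * (u⁻¹) ^ 4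
            ≤ ((3:ℝ) / (x ^ 2 / 2)) ^ 3 * u ^ 2 := by
          have h := exp_neg_div_le (x ^ 2 / 2) ha 3 u hu
          calc Real.exp (-(x ^ 2 / 2 / u ^ 2)) * (u⁻¹) ^ 4
              ≤ (((3:ℕ):ℝ) / (x ^ 2 / 2)) ^ 3 * u ^ (2 * 3) * (u⁻¹) ^ 4 :=
                mul_le_mul_of_nonneg_right h (by positivity)
            _ = ((3:ℝ) / (x ^ 2 / 2)) ^ 3 * u ^ 2 := by
                push_cast
                field_simp
        have he0 : Real.exp (-(x ^ 2 / 2 / u ^ 2)) ≤ ((1:ℝ) / (x ^ 2 / 2)) * u ^ 2 := by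
          have h := exp_neg_div_le (x ^ 2 / 2) ha 1 u hu
          calc Real.exp (-(x ^ 2 / 2 / u ^ 2))
              ≤ (((1:ℕ):ℝ) / (x ^ 2 / 2)) ^ 1 * u ^ (2 * 1) :=  h
            _ = ((1:ℝ) / (x ^ 2 / 2)) * u ^ 2 := by push_cast; ring
        have hearg : Real.exp (-x ^ 2 / (2 * u ^ 2) - u ^ 2 / (2 * v))
            ≤ Real.exp (-(x ^ 2 / 2 / u ^ 2)) := by
          apply Real.exp_le_exp.2
          have h1 : -x ^ 2 / (2 * u ^ 2) = -(x ^ 2 / 2 / u ^ 2) := by ring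
          have h2 : (0:ℝ) ≤ u ^ 2 / (2 * v) := by positivity
          linarith [h1.ge, h1.le]
        have hQb : |(u⁻¹) ^ 2 - x ^ 2 * (u⁻¹) ^ 4 - v⁻¹|
            ≤ (u⁻¹) ^ 2 + x ^ 2 * (u⁻¹) ^ 4 + v⁻¹ := by
          calc |(u⁻¹) ^ 2 - x ^ 2 * (u⁻¹) ^ 4 - v⁻¹|
              ≤ |(u⁻¹) ^ 2 - x ^ 2 * (u⁻¹) ^ 4| + |v⁻¹| := abs_sub _ _
            _ ≤ (|(u⁻¹) ^ 2| + |x ^ 2 * (u⁻¹) ^ 4|) + |v⁻¹| :=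
                add_le_add_left (abs_sub _ _) _
            _ = (u⁻¹) ^ 2 + x ^ 2 * (u⁻¹) ^ 4 + v⁻¹ := by
                rw [abs_of_nonneg (by positivity : (0:ℝ) ≤ (u⁻¹) ^ 2),
                  abs_of_nonneg (by positivity : (0:ℝ) ≤ x ^ 2 * (u⁻¹) ^ 4),
                  abs_of_nonneg (by positivity : (0:ℝ) ≤ v⁻¹)]
        have hEu : E u = c₀ * (Real.exp (-x ^ 2 / (2 * u ^ 2) - u ^ 2 / (2 * v)) *
            ((u⁻¹) ^ 2 - x ^ 2 * (u⁻¹) ^ 4 - v⁻¹)) := by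
          rw [hEdef]; simp [not_le.2 hu]
        rw [hEu, abs_mul, abs_of_nonneg hc₀.le, abs_mul,
          abs_of_nonneg (Real.exp_pos _).le]
        calc c₀ * (Real.exp (-x ^ 2 / (2 * u ^ 2) - u ^ 2 / (2 * v)) *
              |(u⁻¹) ^ 2 - x ^ 2 * (u⁻¹) ^ 4 - v⁻¹|)
            ≤ c₀ * (Real.exp (-(x ^ 2 / 2 / u ^ 2)) *
              ((u⁻¹) ^ 2 + x ^ 2 * (u⁻¹) ^ 4 + v⁻¹)) := by
              apply mul_le_mul_of_nonneg_left _ hc₀.le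
              apply mul_le_mul hearg hQb (abs_nonneg _) (Real.exp_pos _).le
          _ = c₀ * (Real.exp (-(x ^ 2 / 2 / u ^ 2)) * (u⁻¹) ^ 2
              + x ^ 2 * (Real.exp (-(x ^ 2 / 2 / u ^ 2)) * (u⁻¹) ^ 4)
              + v⁻¹ * Real.exp (-(x ^ 2 / 2 / u ^ 2))) := by ring
          _ ≤ c₀ * (((2:ℝ) / (x ^ 2 / 2)) ^ 2 * u ^ 2
              + x ^ 2 * (((3:ℝ) / (x ^ 2 / 2)) ^ 3 * u ^ 2)
              + v⁻¹ * (((1:ℝ) / (x ^ 2 / 2)) * u ^ 2)) := by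
              apply mul_le_mul_of_nonneg_left _ hc₀.le
              apply add_le_add (add_le_add he2
                (mul_le_mul_of_nonneg_left he4 (by positivity)))
                (mul_le_mul_of_nonneg_left he0 (by positivity))
          _ = (c₀ * (((2:ℝ) / (x ^ 2 / 2)) ^ 2 + x ^ 2 * ((3:ℝ) / (x ^ 2 / 2)) ^ 3 +
              v⁻¹ * ((1:ℝ) / (x ^ 2 / 2)))) * u ^ 2 := by ring
      apply squeeze_zero_norm' (a := fun u =>
        (c₀ * (((2:ℝ) / (x ^ 2 / 2)) ^ 2 + x ^ 2 * ((3:ℝ) / (x ^ 2 / 2)) ^ 3 +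
          v⁻¹ * ((1:ℝ) / (x ^ 2 / 2)))) * u ^ 2)
      · filter_upwards [eventually_mem_nhdsWithin] with u hu
        rcases eq_or_lt_of_le (mem_Ici.1 hu) with h | h
        · rw [← h]
          simp [hE0]
        · exact hC2 u h
      · have hco : Continuous (fun u : ℝ =>
            (c₀ * (((2:ℝ) / (x ^ 2 / 2)) ^ 2 + x ^ 2 * ((3:ℝ) / (x ^ 2 / 2)) ^ 3 +
              v⁻¹ * ((1:ℝ) / (x ^ 2 / 2)))) * u ^ 2) := continuous_const.mul (continuous_pow 2)
        have h := hco.tendsto 0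
        rw [show (c₀ * (((2:ℝ) / (x ^ 2 / 2)) ^ 2 + x ^ 2 * ((3:ℝ) / (x ^ 2 / 2)) ^ 3 +
            v⁻¹ * ((1:ℝ) / (x ^ 2 / 2)))) * (0:ℝ) ^ 2 = 0 by ring] at h
        exact h.mono_left nhdsWithin_le_nhds
    -- limit at infinity
    have htop : Tendsto E atTop (𝓝 0) := by
      apply squeeze_zero_norm' (a := fun u =>
        (c₀ * (1 + x ^ 2 + v⁻¹)) * Real.exp (-((2 * v)⁻¹ * u ^ 2)))
      · filter_upwards [eventually_ge_atTop (1:ℝ)] with u hu1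
        have hu : (0:ℝ) < u := lt_of_lt_of_le one_pos hu1
        have hui : u⁻¹ ≤ 1 := by
          rw [inv_le_one_iff₀]
          right; exact hu1
        have hui0 : (0:ℝ) ≤ u⁻¹ := by positivity
        have hEu : E u = c₀ * (Real.exp (-x ^ 2 / (2 * u ^ 2) - u ^ 2 / (2 * v)) *
            ((u⁻¹) ^ 2 - x ^ 2 * (u⁻¹) ^ 4 - v⁻¹)) := by
          rw [hEdef]; simp [not_le.2 hu]
        have hearg : Real.exp (-x ^ 2 / (2 * u ^ 2) - u ^ 2 / (2 * v))
            ≤ Real.exp (-((2 * v)⁻¹ * u ^ 2)) := by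
          apply Real.exp_le_exp.2
          have h1 : -((2 * v)⁻¹ * u ^ 2) = -(u ^ 2 / (2 * v)) := by ring
          have h2 : (0:ℝ) ≤ x ^ 2 / (2 * u ^ 2) := by positivity
          rw [h1]
          have : -x ^ 2 / (2 * u ^ 2) = -(x ^ 2 / (2 * u ^ 2)) := by ring
          linarith [this.le, this.ge]
        have hQb : |(u⁻¹) ^ 2 - x ^ 2 * (u⁻¹) ^ 4 - v⁻¹| ≤ 1 + x ^ 2 + v⁻¹ := by
          have h2 : (u⁻¹) ^ 2 ≤ 1 := pow_le_one₀ hui0 hui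
          have h4 : (u⁻¹) ^ 4 ≤ 1 := pow_le_one₀ hui0 hui
          calc |(u⁻¹) ^ 2 - x ^ 2 * (u⁻¹) ^ 4 - v⁻¹|
              ≤ |(u⁻¹) ^ 2 - x ^ 2 * (u⁻¹) ^ 4| + |v⁻¹| := abs_sub _ _
            _ ≤ (|(u⁻¹) ^ 2| + |x ^ 2 * (u⁻¹) ^ 4|) + |v⁻¹| :=
                add_le_add_left (abs_sub _ _) _
            _ = (u⁻¹) ^ 2 + x ^ 2 * (u⁻¹) ^ 4 + v⁻¹ := by
                rw [abs_of_nonneg (by positivity : (0:ℝ) ≤ (u⁻¹) ^ 2),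
                  abs_of_nonneg (by positivity : (0:ℝ) ≤ x ^ 2 * (u⁻¹) ^ 4),
                  abs_of_nonneg (by positivity : (0:ℝ) ≤ v⁻¹)]
            _ ≤ 1 + x ^ 2 + v⁻¹ := by nlinarith [sq_nonneg x]
        rw [Real.norm_eq_abs, hEu, abs_mul, abs_of_nonneg hc₀.le, abs_mul,
          abs_of_nonneg (Real.exp_pos _).le]
        calc c₀ * (Real.exp (-x ^ 2 / (2 * u ^ 2) - u ^ 2 / (2 * v)) *
              |(u⁻¹) ^ 2 - x ^ 2 * (u⁻¹) ^ 4 - v⁻¹|)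
            ≤ c₀ * (Real.exp (-((2 * v)⁻¹ * u ^ 2)) * (1 + x ^ 2 + v⁻¹)) := by
              apply mul_le_mul_of_nonneg_left _ hc₀.le
              apply mul_le_mul hearg hQb (abs_nonneg _) (Real.exp_pos _).le
          _ = (c₀ * (1 + x ^ 2 + v⁻¹)) * Real.exp (-((2 * v)⁻¹ * u ^ 2)) := by ring
      · have h1 : Tendsto (fun u : ℝ => -((2 * v)⁻¹ * u ^ 2)) atTop atBot := by
          have h2 : Tendsto (fun u : ℝ => (2 * v)⁻¹ * u ^ 2) atTop atTop := by
            apply Tendsto.const_mul_atTop (by positivity)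
            exact tendsto_pow_atTop (by norm_num)
          exact tendsto_neg_atBot_iff.2 h2
        have h3 := (Real.tendsto_exp_atBot).comp h1
        have h4 := h3.const_mul (c₀ * (1 + x ^ 2 + v⁻¹))
        rw [mul_zero] at h4
        exact h4
    have hFTC := integral_Ioi_of_hasDerivAt_of_tendsto hcont hderiv hWint htop
    rw [hE0, sub_zero] at hFTC
    exact hFTC
  have e1 : (∫ s in Ioi (0:ℝ),
      (((s ^ 2 - v) * (v⁻¹) ^ 2) * gauss x (s ^ 2) * gauss s v
      + (2 * ((x ^ 2 * (s⁻¹) ^ 4 - (s⁻¹) ^ 2) * gauss x (s ^ 2) * gauss s v)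
        + x * ((3 * x * (s⁻¹) ^ 4 - x ^ 3 * (s⁻¹) ^ 6) * gauss x (s ^ 2) * gauss s v))))
      = (∫ s in Ioi (0:ℝ), ((s ^ 2 - v) * (v⁻¹) ^ 2) * gauss x (s ^ 2) * gauss s v)
        + ∫ s in Ioi (0:ℝ),
          (2 * ((x ^ 2 * (s⁻¹) ^ 4 - (s⁻¹) ^ 2) * gauss x (s ^ 2) * gauss s v)
          + x * ((3 * x * (s⁻¹) ^ 4 - x ^ 3 * (s⁻¹) ^ 6) * gauss x (s ^ 2) * gauss s v)) :=
    integral_add hint1 ((hint2.const_mul 2).add (hint3.const_mul x))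
  have e2 : (∫ s in Ioi (0:ℝ),
      (2 * ((x ^ 2 * (s⁻¹) ^ 4 - (s⁻¹) ^ 2) * gauss x (s ^ 2) * gauss s v)
      + x * ((3 * x * (s⁻¹) ^ 4 - x ^ 3 * (s⁻¹) ^ 6) * gauss x (s ^ 2) * gauss s v)))
      = (∫ s in Ioi (0:ℝ), 2 * ((x ^ 2 * (s⁻¹) ^ 4 - (s⁻¹) ^ 2) * gauss x (s ^ 2) * gauss s v))
        + ∫ s in Ioi (0:ℝ), x * ((3 * x * (s⁻¹) ^ 4 - x ^ 3 * (s⁻¹) ^ 6) *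
            gauss x (s ^ 2) * gauss s v) :=
    integral_add (hint2.const_mul 2) (hint3.const_mul x)
  have e3 : (∫ s in Ioi (0:ℝ), 2 * ((x ^ 2 * (s⁻¹) ^ 4 - (s⁻¹) ^ 2) *
      gauss x (s ^ 2) * gauss s v))
      = 2 * ∫ s in Ioi (0:ℝ), (x ^ 2 * (s⁻¹) ^ 4 - (s⁻¹) ^ 2) * gauss x (s ^ 2) * gauss s v :=
    MeasureTheory.integral_const_mul _ _
  have e4 : (∫ s in Ioi (0:ℝ), x * ((3 * x * (s⁻¹) ^ 4 - x ^ 3 * (s⁻¹) ^ 6) *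
      gauss x (s ^ 2) * gauss s v))
      = x * ∫ s in Ioi (0:ℝ), (3 * x * (s⁻¹) ^ 4 - x ^ 3 * (s⁻¹) ^ 6) *
        gauss x (s ^ 2) * gauss s v :=
    MeasureTheory.integral_const_mul _ _
  linarith [hWzero, e1, e2, e3, e4]

/-! ### Iterated derivatives of `densJ1` in the space variable -/

lemma densJ1_hasDerivAt_x (H t : ℝ) (hv : 0 < t ^ (2 * H)) (y : ℝ) (hy : y ≠ 0) :
    HasDerivAt (fun z => densJ1 H z t)
      (2 * ∫ s in Ioi (0:ℝ), -(y * (s⁻¹) ^ 2) * gauss y (s ^ 2) * gauss s (t ^ (2 * H))) y := by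
  have h := ((L1 (t ^ (2 * H)) hv y hy).1).const_mul 2
  exact h

lemma densJ1_iter2 (H t : ℝ) (hv : 0 < t ^ (2 * H)) (y : ℝ) (hy : y ≠ 0) :
    iteratedDeriv 2 (fun z => densJ1 H z t) y
      = 2 * ∫ s in Ioi (0:ℝ), (y ^ 2 * (s⁻¹) ^ 4 - (s⁻¹) ^ 2) *
          gauss y (s ^ 2) * gauss s (t ^ (2 * H)) := by
  have hne : {z : ℝ | z ≠ 0} ∈ 𝓝 y := isOpen_compl_singleton.mem_nhds hy
  have e1 : deriv (fun z => densJ1 H z t) =ᶠ[𝓝 y]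
      (fun z => 2 * ∫ s in Ioi (0:ℝ), -(z * (s⁻¹) ^ 2) * gauss z (s ^ 2) *
        gauss s (t ^ (2 * H))) := by
    filter_upwards [hne] with z hz
    exact (densJ1_hasDerivAt_x H t hv z hz).deriv
  rw [iteratedDeriv_succ, iteratedDeriv_one, e1.deriv_eq]
  exact (((L2 (t ^ (2 * H)) hv y hy).1).const_mul 2).deriv

lemma densJ1_iter3 (H t x : ℝ) (hv : 0 < t ^ (2 * H)) (hx : x ≠ 0) :
    iteratedDeriv 3 (fun z => densJ1 H z t) x
      = 2 * ∫ s in Ioi (0:ℝ), (3 * x * (s⁻¹) ^ 4 - x ^ 3 * (s⁻¹) ^ 6) *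
          gauss x (s ^ 2) * gauss s (t ^ (2 * H)) := by
  have hne : {z : ℝ | z ≠ 0} ∈ 𝓝 x := isOpen_compl_singleton.mem_nhds hx
  have e2 : iteratedDeriv 2 (fun z => densJ1 H z t) =ᶠ[𝓝 x]
      (fun z => 2 * ∫ s in Ioi (0:ℝ), (z ^ 2 * (s⁻¹) ^ 4 - (s⁻¹) ^ 2) *
        gauss z (s ^ 2) * gauss s (t ^ (2 * H))) := by
    filter_upwards [hne] with z hz
    exact densJ1_iter2 H t hv z hz
  rw [iteratedDeriv_succ, e2.deriv_eq]
  exact (((L3 (t ^ (2 * H)) hv x hx).1).const_mul 2).deriv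

/-- For `H ∈ (0,1)`, `x ≠ 0`, `t > 0`, the density of `J¹_F(t)` satisfies
`∂p¹/∂t = −H t^{2H−1} (2 ∂²p¹/∂x² + x ∂³p¹/∂x³)`. -/
theorem densJ1_third_order_pde (H : ℝ) (hH : H ∈ Set.Ioo (0 : ℝ) 1)
    (x t : ℝ) (hx : x ≠ 0) (ht : 0 < t) :
    deriv (fun τ => densJ1 H x τ) t
      = -(H * t ^ (2 * H - 1)) *
          (2 * iteratedDeriv 2 (fun y => densJ1 H y t) x
            + x * iteratedDeriv 3 (fun y => densJ1 H y t) x) := by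
  have hH0 : 0 < H := hH.1
  have hv : 0 < t ^ (2 * H) := Real.rpow_pos_of_pos ht _
  have hLt := Lt H x t hH0 hx ht
  have hL2 := L2 (t ^ (2 * H)) hv x hx
  have hL3 := L3 (t ^ (2 * H)) hv x hx
  have hkey := key_integral (t ^ (2 * H)) hv x hx hLt.2 hL2.2 hL3.2
  rw [hLt.1.deriv, densJ1_iter2 H t hv x hx, densJ1_iter3 H t x hv hx]
  linear_combination (2 * (H * t ^ (2 * H - 1))) * hkey
end

section
/- Let n ≥ 1, H ∈ (0,1), t > 0 and α > 0. Then ∫₀^∞ x^{α−1} · 2^n ∫₀^∞ ⋯ ∫₀^∞ g(x; s₁²) g(s₁; s₂²) ⋯ g(s_{n−2}; s_{n−1}²) g(s_{n−1}; t^{2H}) ds₁ ⋯ ds_{n−1} dx = ( 2^{α/2} Γ(α/2) / √(2π) )^n · t^{H(α−1)}. -/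
open Real Set

/-- Density of `|J^m_F(t)|` where
`J^m_F(t) = B¹_H(|B²_H(… |B^{m+1}_H(t)|^{1/H} …)|^{1/H})`:
for `m = 0` it is `2 g(x; t^{2H})`, and recursively
`p_{m+1}(x,t) = 2 ∫₀^∞ g(x; s²) p_m(s,t) ds`, so that `p_{n-1}` equals
`2^n ∫₀^∞⋯∫₀^∞ g(x; s₁²) g(s₁; s₂²) ⋯ g(s_{n−1}; t^{2H}) ds₁⋯ds_{n−1}`. -/
noncomputable def densAbsJ (H : ℝ) : ℕ → ℝ → ℝ → ℝ
  | 0, x, t => 2 * gauss x (t ^ (2 * H))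
  | m + 1, x, t => 2 * ∫ s in Set.Ioi (0 : ℝ), gauss x (s ^ 2) * densAbsJ H m s t

open MeasureTheory

lemma gauss_nonneg_s10 (x v : ℝ) : 0 ≤ gauss x v := by
  unfold gauss; positivity

lemma densAbsJ_nonneg (H : ℝ) : ∀ (m : ℕ) (x t : ℝ), 0 ≤ densAbsJ H m x t
  | 0, x, t => by
      simp only [densAbsJ]
      exact mul_nonneg (by norm_num) (gauss_nonneg_s10 _ _)
  | m + 1, x, t => by
      simp only [densAbsJ]
      refine mul_nonneg (by norm_num) (setIntegral_nonneg measurableSet_Ioi fun s _ => ?_)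
      exact mul_nonneg (gauss_nonneg_s10 _ _) (densAbsJ_nonneg H m s t)

lemma measurable_gauss : Measurable fun q : ℝ × ℝ => gauss q.1 q.2 := by
  unfold gauss
  exact ((measurable_const.mul measurable_snd).sqrt.inv).mul
    (((measurable_fst.pow measurable_const).neg.div
      (measurable_const.mul measurable_snd)).exp)

lemma measurable_densAbsJ (H t : ℝ) (m : ℕ) : Measurable fun x => densAbsJ H m x t := by
  induction m with
  | zero =>
      simp only [densAbsJ]
      have : Measurable fun x : ℝ => (x, t ^ (2 * H)) :=
        measurable_id.prodMk measurable_const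
      exact (measurable_gauss.comp this).const_mul 2
  | succ m ih =>
      simp only [densAbsJ]
      have hF : Measurable fun q : ℝ × ℝ => gauss q.1 (q.2 ^ 2) * densAbsJ H m q.2 t :=
        (measurable_gauss.comp
            (measurable_fst.prodMk (measurable_snd.pow measurable_const))).mul
          (ih.comp measurable_snd)
      exact (hF.stronglyMeasurable.integral_prod_right').measurable.const_mul 2

lemma integrableOn_mellin_gauss {α v : ℝ} (hα : 0 < α) (hv : 0 < v) :
    IntegrableOn (fun x => x ^ (α - 1) * (2 * gauss x v)) (Ioi (0 : ℝ)) := by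
  have hb : 0 < (2 * v)⁻¹ := by positivity
  have h : IntegrableOn
      (fun x : ℝ => x ^ (α - 1) * Real.exp (-(2 * v)⁻¹ * x ^ 2)
        * ((Real.sqrt (2 * Real.pi * v))⁻¹ * 2)) (Ioi 0) :=
    (integrableOn_rpow_mul_exp_neg_mul_sq hb (s := α - 1) (by linarith)).mul_const _
  refine h.congr_fun (fun x _ => ?_) measurableSet_Ioi
  unfold gauss
  dsimp only
  rw [show -(2 * v)⁻¹ * x ^ 2 = -x ^ 2 / (2 * v) by rw [div_eq_inv_mul]; ring]
  ring

lemma integral_mellin_gauss {α v : ℝ} (hα : 0 < α) (hv : 0 < v) :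
    ∫ x in Ioi (0 : ℝ), x ^ (α - 1) * (2 * gauss x v)
      = ((2 : ℝ) ^ (α / 2) * Real.Gamma (α / 2) / Real.sqrt (2 * Real.pi))
          * v ^ ((α - 1) / 2) := by
  have hb : 0 < (2 * v)⁻¹ := by positivity
  have h2v : (0 : ℝ) < 2 * v := by linarith
  have h1 : ∫ x in Ioi (0 : ℝ), x ^ (α - 1) * (2 * gauss x v)
      = ((Real.sqrt (2 * Real.pi * v))⁻¹ * 2)
          * ∫ x in Ioi (0 : ℝ), x ^ (α - 1) * Real.exp (-(2 * v)⁻¹ * x ^ (2 : ℝ)) := by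
    rw [← integral_const_mul]
    refine setIntegral_congr_fun measurableSet_Ioi fun x _ => ?_
    unfold gauss
    rw [Real.rpow_two,
      show -(2 * v)⁻¹ * x ^ 2 = -x ^ 2 / (2 * v) by rw [div_eq_inv_mul]; ring]
    ring
  rw [h1, integral_rpow_mul_exp_neg_mul_rpow two_pos (by linarith) hb]
  rw [show α - 1 + 1 = α by ring]
  rw [show (2 * v)⁻¹ = (2 * v) ^ (-1 : ℝ) by rw [Real.rpow_neg_one],
    ← Real.rpow_mul h2v.le, show (-1 : ℝ) * (-α / 2) = α / 2 by ring,
    Real.mul_rpow (by norm_num : (0:ℝ) ≤ 2) hv.le,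
    Real.sqrt_mul (by positivity : (0:ℝ) ≤ 2 * Real.pi) v,
    Real.sqrt_eq_rpow v,
    show α / 2 = (α - 1) / 2 + 1 / 2 by ring, Real.rpow_add hv]
  have hs : Real.sqrt (2 * Real.pi) ≠ 0 := by positivity
  have hv2 : v ^ ((1:ℝ) / 2) ≠ 0 := (Real.rpow_pos_of_pos hv _).ne'
  field_simp

set_option maxHeartbeats 1000000 in
lemma mellin_densAbsJ_aux (H t α : ℝ) (ht : 0 < t) (hα : 0 < α) (m : ℕ) :
    IntegrableOn (fun x => x ^ (α - 1) * densAbsJ H m x t) (Ioi (0 : ℝ)) ∧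
    ∫ x in Ioi (0 : ℝ), x ^ (α - 1) * densAbsJ H m x t
      = ((2 : ℝ) ^ (α / 2) * Real.Gamma (α / 2) / Real.sqrt (2 * Real.pi)) ^ (m + 1) *
          t ^ (H * (α - 1)) := by
  set C : ℝ := (2 : ℝ) ^ (α / 2) * Real.Gamma (α / 2) / Real.sqrt (2 * Real.pi) with hC
  induction m with
  | zero =>
      have hv : (0 : ℝ) < t ^ (2 * H) := Real.rpow_pos_of_pos ht _
      constructor
      · simpa only [densAbsJ] using integrableOn_mellin_gauss hα hv
      · simp only [densAbsJ]
        rw [integral_mellin_gauss hα hv, ← Real.rpow_mul ht.le,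
          show 2 * H * ((α - 1) / 2) = H * (α - 1) by ring, pow_one]
  | succ m ih =>
      obtain ⟨ihInt, ihVal⟩ := ih
      -- the product function
      set G : ℝ × ℝ → ℝ :=
        fun q => q.1 ^ (α - 1) * (2 * gauss q.1 (q.2 ^ 2)) * densAbsJ H m q.2 t with hG
      have hGmeas : Measurable G := by
        refine ((measurable_fst.pow_const _).mul ?_).mul
          ((measurable_densAbsJ H t m).comp measurable_snd)
        exact (measurable_gauss.comp
          (measurable_fst.prodMk (measurable_snd.pow measurable_const))).const_mul 2
      -- value of the inner x-integral for s > 0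
      have hinner : ∀ s ∈ Ioi (0 : ℝ),
          ∫ x in Ioi (0 : ℝ), G (x, s) = C * (s ^ (α - 1) * densAbsJ H m s t) := by
        intro s hs
        have hs0 : (0 : ℝ) < s := hs
        have hsq : (0 : ℝ) < s ^ 2 := pow_pos hs0 2
        have : ∫ x in Ioi (0 : ℝ), G (x, s)
            = (∫ x in Ioi (0 : ℝ), x ^ (α - 1) * (2 * gauss x (s ^ 2)))
                * densAbsJ H m s t := by
          rw [← integral_mul_const]
        rw [this, integral_mellin_gauss hα hsq]
        have : (s ^ 2 : ℝ) ^ ((α - 1) / 2) = s ^ (α - 1) := by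
          rw [← Real.rpow_two, ← Real.rpow_mul hs0.le,
            show 2 * ((α - 1) / 2) = α - 1 by ring]
        rw [this]; ring
      -- nonnegativity of G on the quadrant
      have hGnn : ∀ x ∈ Ioi (0 : ℝ), ∀ s, 0 ≤ G (x, s) := by
        intro x hx s
        exact mul_nonneg (mul_nonneg (Real.rpow_nonneg (le_of_lt hx) _)
          (mul_nonneg (by norm_num) (gauss_nonneg_s10 _ _))) (densAbsJ_nonneg H m s t)
      -- integrability on the product
      have hGint : Integrable G
          ((volume.restrict (Ioi (0:ℝ))).prod (volume.restrict (Ioi (0:ℝ)))) := by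
        refine (integrable_prod_iff' hGmeas.aestronglyMeasurable).2 ⟨?_, ?_⟩
        · filter_upwards [ae_restrict_mem measurableSet_Ioi] with s hs
          have hsq : (0 : ℝ) < s ^ 2 := pow_pos (mem_Ioi.mp hs) 2
          have h := (integrableOn_mellin_gauss hα hsq).mul_const (densAbsJ H m s t)
          simp only [hG]
          exact h
        · have hnormint : ∀ s ∈ Ioi (0 : ℝ),
              (∫ x in Ioi (0 : ℝ), ‖G (x, s)‖)
                = C * (s ^ (α - 1) * densAbsJ H m s t) := by
            intro s hs
            rw [← hinner s hs]
            refine setIntegral_congr_fun measurableSet_Ioi fun x hx => ?_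
            exact Real.norm_of_nonneg (hGnn x hx s)
          refine (Integrable.congr (ihInt.const_mul C) ?_)
          refine (ae_restrict_iff' measurableSet_Ioi).2 (Filter.Eventually.of_forall ?_)
          intro s hs
          show C * (s ^ (α - 1) * densAbsJ H m s t) = ∫ x in Ioi (0 : ℝ), ‖G (x, s)‖
          rw [hnormint s hs]
      -- unfold and swap
      have hexp : ∀ x ∈ Ioi (0 : ℝ),
          x ^ (α - 1) * densAbsJ H (m + 1) x t = ∫ s in Ioi (0 : ℝ), G (x, s) := by
        intro x hx
        simp only [densAbsJ]
        rw [show x ^ (α - 1) * (2 * ∫ s in Ioi (0:ℝ), gauss x (s ^ 2) * densAbsJ H m s t)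
            = (x ^ (α - 1) * 2) * ∫ s in Ioi (0:ℝ), gauss x (s ^ 2) * densAbsJ H m s t
            by ring, ← integral_const_mul]
        refine setIntegral_congr_fun measurableSet_Ioi fun s _ => ?_
        simp only [hG]; ring
      have hswap : ∫ x in Ioi (0 : ℝ), ∫ s in Ioi (0 : ℝ), G (x, s)
          = ∫ s in Ioi (0 : ℝ), ∫ x in Ioi (0 : ℝ), G (x, s) :=
        integral_integral_swap hGint
      constructor
      · refine (hGint.integral_prod_left).congr ?_
        refine (ae_restrict_iff' measurableSet_Ioi).2 (Filter.Eventually.of_forall ?_)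
        intro x hx
        exact (hexp x hx).symm
      · calc ∫ x in Ioi (0 : ℝ), x ^ (α - 1) * densAbsJ H (m + 1) x t
            = ∫ x in Ioi (0 : ℝ), ∫ s in Ioi (0 : ℝ), G (x, s) :=
              setIntegral_congr_fun measurableSet_Ioi hexp
          _ = ∫ s in Ioi (0 : ℝ), ∫ x in Ioi (0 : ℝ), G (x, s) := hswap
          _ = ∫ s in Ioi (0 : ℝ), C * (s ^ (α - 1) * densAbsJ H m s t) :=
              setIntegral_congr_fun measurableSet_Ioi hinner
          _ = C * ∫ s in Ioi (0 : ℝ), s ^ (α - 1) * densAbsJ H m s t :=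
              integral_const_mul _ _
          _ = C ^ (m + 1 + 1) * t ^ (H * (α - 1)) := by rw [ihVal]; ring

/-- Mellin transform of the density of `|J^{n−1}_F(t)|`: for `n ≥ 1`, `H ∈ (0,1)`,
`t > 0` and `α > 0`,
`∫₀^∞ x^{α−1} p_{n−1}(x,t) dx = (2^{α/2} Γ(α/2)/√(2π))^n t^{H(α−1)}`. -/
theorem mellin_densAbsJ (n : ℕ) (hn : 1 ≤ n) (H : ℝ) (hH : H ∈ Set.Ioo (0 : ℝ) 1)
    (t α : ℝ) (ht : 0 < t) (hα : 0 < α) :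
    ∫ x in Set.Ioi (0 : ℝ), x ^ (α - 1) * densAbsJ H (n - 1) x t
      = ((2 : ℝ) ^ (α / 2) * Real.Gamma (α / 2) / Real.sqrt (2 * Real.pi)) ^ n *
          t ^ (H * (α - 1)) := by
  have h := (mellin_densAbsJ_aux H t α ht hα (n - 1)).2
  rwa [Nat.sub_add_cancel hn] at h
end

section
/- Let H ∈ (0,1] and t > 0, and let X and Y be independent real random variables each distributed as a centered Gaussian with variance t^H (i.e. the law of B_{H/2}(t)). Then the law of the product XY is absolutely continuous with density x ↦ (1/(π t^H)) K₀(|x|/t^H), where K₀(y) = ∫₀^∞ u^{-1} exp(−y²/(4u²) − u²) du. Equivalently, the pushforward of the product measure (gaussian 0 t^H) ⊗ (gaussian 0 t^H) under the map (x,y) ↦ xy equals the measure on ℝ with density (1/(π t^H)) K₀(|x|/t^H) with respect to Lebesgue measure. -/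
open Real Set MeasureTheory ProbabilityTheory

/-- Modified Bessel function of the second kind of order zero, via the integral
representation `K₀(y) = ∫₀^∞ u^{-1} exp(−y²/(4u²) − u²) du`. -/
noncomputable def besselK0 (y : ℝ) : ℝ :=
  ∫ u in Set.Ioi (0 : ℝ), u⁻¹ * Real.exp (-y ^ 2 / (4 * u ^ 2) - u ^ 2)


open scoped ENNReal NNReal


lemma exp_neg_le_inv' {a : ℝ} (ha : 0 < a) : Real.exp (-a) ≤ a⁻¹ := by
  rw [Real.exp_neg]
  exact inv_anti₀ ha (by linarith [Real.add_one_le_exp a])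

lemma gaussianPDFReal_toNNReal {s : ℝ} (hs : 0 < s) (y : ℝ) :
    gaussianPDFReal 0 s.toNNReal y = (Real.sqrt (2 * π * s))⁻¹ * Real.exp (-y ^ 2 / (2 * s)) := by
  rw [gaussianPDFReal, Real.coe_toNNReal _ hs.le]
  ring_nf

lemma integrableG (s z : ℝ) (hs : 0 < s) (hz : z ≠ 0) :
    Integrable (fun x : ℝ =>
      gaussianPDFReal 0 s.toNNReal x * |x⁻¹| * gaussianPDFReal 0 s.toNNReal (x⁻¹ * z)) := by
  set c : ℝ := (Real.sqrt (2 * π * s))⁻¹ with hc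
  have hc0 : 0 ≤ c := inv_nonneg.2 (Real.sqrt_nonneg _)
  have hpdf : ∀ y : ℝ, gaussianPDFReal 0 s.toNNReal y = c * Real.exp (-y ^ 2 / (2 * s)) :=
    fun y => gaussianPDFReal_toNNReal hs y
  have hmeas : AEStronglyMeasurable (fun x : ℝ =>
      gaussianPDFReal 0 s.toNNReal x * |x⁻¹| * gaussianPDFReal 0 s.toNNReal (x⁻¹ * z)) volume := by
    refine Measurable.aestronglyMeasurable ?_
    exact ((measurable_gaussianPDFReal 0 _).mul (measurable_inv.abs)).mul
      ((measurable_gaussianPDFReal 0 _).comp (measurable_inv.mul_const z))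
  have hbase : Integrable (fun x : ℝ =>
      c * c * (2 * s / z ^ 2) * (|x| * Real.exp (-x ^ 2 / (2 * s)))) := by
    refine Integrable.const_mul ?_ _
    have := (integrable_mul_exp_neg_mul_sq (b := (2*s)⁻¹) (by positivity)).norm
    refine this.congr (Filter.Eventually.of_forall fun x => ?_)
    show ‖x * Real.exp (-(2 * s)⁻¹ * x ^ 2)‖ = |x| * Real.exp (-x ^ 2 / (2 * s))
    rw [show -(2*s)⁻¹ * x ^ 2 = -x ^ 2 / (2 * s) by ring]
    simp [abs_mul, abs_of_nonneg (Real.exp_nonneg _)]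
  refine hbase.mono' hmeas (Filter.Eventually.of_forall fun x => ?_)
  rcases eq_or_ne x 0 with rfl | hx
  · simp
  · have h2 : gaussianPDFReal 0 s.toNNReal (x⁻¹ * z) ≤ c * (2 * s / z ^ 2 * x ^ 2) := by
      rw [hpdf]
      gcongr c * ?_
      have ha : 0 < (x⁻¹ * z) ^ 2 / (2 * s) := by positivity
      calc Real.exp (-(x⁻¹ * z) ^ 2 / (2 * s)) = Real.exp (-((x⁻¹ * z) ^ 2 / (2 * s))) := by
            rw [neg_div]
        _ ≤ ((x⁻¹ * z) ^ 2 / (2 * s))⁻¹ := exp_neg_le_inv' ha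
        _ = 2 * s / z ^ 2 * x ^ 2 := by
            field_simp
    have hnn : 0 ≤ gaussianPDFReal 0 s.toNNReal x * |x⁻¹| *
        gaussianPDFReal 0 s.toNNReal (x⁻¹ * z) :=
      mul_nonneg (mul_nonneg (gaussianPDFReal_nonneg _ _ _) (abs_nonneg _))
        (gaussianPDFReal_nonneg _ _ _)
    rw [Real.norm_of_nonneg hnn, hpdf x]
    have habs : |x⁻¹| * x ^ 2 = |x| := by
      rw [abs_inv, ← sq_abs, sq, ← mul_assoc, inv_mul_cancel₀ (abs_ne_zero.2 hx), one_mul]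
    calc c * Real.exp (-x ^ 2 / (2 * s)) * |x⁻¹| * gaussianPDFReal 0 s.toNNReal (x⁻¹ * z)
        ≤ c * Real.exp (-x ^ 2 / (2 * s)) * |x⁻¹| * (c * (2 * s / z ^ 2 * x ^ 2)) := by
          gcongr
      _ = c * c * (2 * s / z ^ 2) * (|x⁻¹| * x ^ 2 * Real.exp (-x ^ 2 / (2 * s))) := by ring
      _ = c * c * (2 * s / z ^ 2) * (|x| * Real.exp (-x ^ 2 / (2 * s))) := by rw [habs]


lemma integralG (s z : ℝ) (hs : 0 < s) (hz : z ≠ 0) :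
    (∫ x : ℝ, gaussianPDFReal 0 s.toNNReal x * |x⁻¹| * gaussianPDFReal 0 s.toNNReal (x⁻¹ * z))
      = (π * s)⁻¹ * besselK0 (|z| / s) := by
  set c : ℝ := (Real.sqrt (2 * π * s))⁻¹ with hc
  set Q : ℝ → ℝ := fun y => c * Real.exp (-y ^ 2 / (2 * s)) * y⁻¹ *
      (c * Real.exp (-(y⁻¹ * z) ^ 2 / (2 * s))) with hQ
  have hpdf : ∀ y : ℝ, gaussianPDFReal 0 s.toNNReal y = c * Real.exp (-y ^ 2 / (2 * s)) :=
    fun y => gaussianPDFReal_toNNReal hs y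
  have hGQ : ∀ x : ℝ, gaussianPDFReal 0 s.toNNReal x * |x⁻¹| *
      gaussianPDFReal 0 s.toNNReal (x⁻¹ * z) = Q |x| := by
    intro x
    simp only [hQ, hpdf, abs_inv, mul_pow, inv_pow, sq_abs]
  have h1 : (∫ x : ℝ, gaussianPDFReal 0 s.toNNReal x * |x⁻¹| *
      gaussianPDFReal 0 s.toNNReal (x⁻¹ * z)) = 2 * ∫ y in Ioi (0:ℝ), Q y := by
    rw [← integral_comp_abs (f := Q)]
    exact integral_congr_ae (Filter.Eventually.of_forall hGQ)
  set b : ℝ := Real.sqrt (2 * s) with hb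
  have hb0 : 0 < b := Real.sqrt_pos.2 (by positivity)
  have hb2 : b ^ 2 = 2 * s := Real.sq_sqrt (by positivity)
  have hcc : c * c = (2 * π * s)⁻¹ := by
    rw [hc, ← mul_inv, Real.mul_self_sqrt (by positivity)]
  have hsub := integral_comp_mul_left_Ioi Q 0 hb0
  rw [mul_zero] at hsub
  have h2 : (∫ y in Ioi (0:ℝ), Q y) = b * ∫ u in Ioi (0:ℝ), Q (b * u) := by
    rw [hsub, smul_eq_mul, ← mul_assoc, mul_inv_cancel₀ hb0.ne', one_mul]
  have h3 : (∫ u in Ioi (0:ℝ), Q (b * u))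
      = ((2 * π * s)⁻¹ * b⁻¹) * besselK0 (|z| / s) := by
    rw [besselK0, ← integral_const_mul]
    refine setIntegral_congr_fun measurableSet_Ioi fun u hu => ?_
    have hu0 : (0:ℝ) < u := hu
    have hexp : Real.exp (-(|z| / s) ^ 2 / (4 * u ^ 2) - u ^ 2)
        = Real.exp (-(b * u) ^ 2 / (2 * s)) * Real.exp (-((b * u)⁻¹ * z) ^ 2 / (2 * s)) := by
      rw [← Real.exp_add]
      congr 1
      simp only [div_pow, sq_abs, mul_pow, inv_pow, hb2]
      field_simp
      ring
    simp only [hQ]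
    rw [hexp, ← hcc, mul_inv]
    ring
  rw [h1, h2, h3]
  have hπ : (π : ℝ) ≠ 0 := Real.pi_ne_zero
  field_simp

lemma lintegralD (s z : ℝ) (hs : 0 < s) (hz : z ≠ 0) :
    (∫⁻ x : ℝ, gaussianPDF 0 s.toNNReal x * ENNReal.ofReal |x⁻¹| *
        gaussianPDF 0 s.toNNReal (x⁻¹ * z))
      = ENNReal.ofReal ((π * s)⁻¹ * besselK0 (|z| / s)) := by
  have h1 : ∀ x : ℝ, gaussianPDF 0 s.toNNReal x * ENNReal.ofReal |x⁻¹| *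
      gaussianPDF 0 s.toNNReal (x⁻¹ * z)
      = ENNReal.ofReal (gaussianPDFReal 0 s.toNNReal x * |x⁻¹| *
          gaussianPDFReal 0 s.toNNReal (x⁻¹ * z)) := by
    intro x
    rw [gaussianPDF, gaussianPDF,
      ENNReal.ofReal_mul (mul_nonneg (gaussianPDFReal_nonneg _ _ _) (abs_nonneg _)),
      ENNReal.ofReal_mul (gaussianPDFReal_nonneg _ _ _)]
  simp only [h1]
  rw [← ofReal_integral_eq_lintegral_ofReal (integrableG s z hs hz)
      (Filter.Eventually.of_forall fun x =>
        mul_nonneg (mul_nonneg (gaussianPDFReal_nonneg _ _ _) (abs_nonneg _))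
          (gaussianPDFReal_nonneg _ _ _)),
    integralG s z hs hz]

/-- For `H ∈ (0,1]` and `t > 0`, the product of two independent centered Gaussian
random variables with variance `t^H` (i.e. copies of `B_{H/2}(t)`) has law with
Lebesgue density `x ↦ (1/(π t^H)) K₀(|x|/t^H)`: the pushforward of the product
Gaussian measure under `(x,y) ↦ xy` is that density measure. -/
theorem product_gaussian_law_besselK0 (H t : ℝ) (hH : H ∈ Set.Ioc (0 : ℝ) 1)
    (ht : 0 < t) :
    Measure.map (fun p : ℝ × ℝ => p.1 * p.2)
        ((gaussianReal 0 (t ^ H).toNNReal).prod (gaussianReal 0 (t ^ H).toNNReal))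
      = volume.withDensity
          (fun x => ENNReal.ofReal ((Real.pi * t ^ H)⁻¹ * besselK0 (|x| / t ^ H))) := by
  set s : ℝ := t ^ H with hsdef
  have hs : 0 < s := Real.rpow_pos_of_pos ht H
  set v : ℝ≥0 := s.toNNReal with hvdef
  have hv : v ≠ 0 := (Real.toNNReal_pos.mpr hs).ne'
  set f : ℝ → ℝ≥0∞ := gaussianPDF 0 v with hfdef
  have hfm : Measurable f := measurable_gaussianPDF 0 v
  have hμ : gaussianReal 0 v = volume.withDensity f := gaussianReal_of_var_ne_zero 0 hv
  have hae : ∀ᵐ x : ℝ ∂(volume : Measure ℝ), x ≠ 0 := by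
    rw [ae_iff]
    simp
  ext A hA
  have hmul : Measurable (fun p : ℝ × ℝ => p.1 * p.2) := measurable_fst.mul measurable_snd
  rw [Measure.map_apply hmul hA]
  set S : Set (ℝ × ℝ) := (fun p : ℝ × ℝ => p.1 * p.2) ⁻¹' A with hSdef
  have hS : MeasurableSet S := hmul hA
  rw [Measure.prod_apply hS]
  -- outer measure to withDensity
  conv_lhs => rw [hμ]
  rw [lintegral_withDensity_eq_lintegral_mul volume hfm
    (measurable_measure_prodMk_left (ν := volume.withDensity f) hS)]
  -- pointwise a.e. rewrite of the slice
  have hstep : ∀ᵐ x : ℝ ∂(volume : Measure ℝ),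
      (f * fun x => (volume.withDensity f) (Prod.mk x ⁻¹' S)) x
        = ∫⁻ w in A, f x * ENNReal.ofReal |x⁻¹| * f (x⁻¹ * w) ∂volume := by
    filter_upwards [hae] with x hx
    have hpre : Prod.mk x ⁻¹' S = (fun y => x * y) ⁻¹' A := rfl
    have hA' : MeasurableSet ((fun y => x * y) ⁻¹' A) := measurable_const_mul x hA
    have hφm : Measurable (A.indicator fun w => f (x⁻¹ * w)) :=
      (hfm.comp (measurable_const_mul x⁻¹)).indicator hA
    have hslice : (volume.withDensity f) (Prod.mk x ⁻¹' S)
        = ENNReal.ofReal |x⁻¹| * ∫⁻ w in A, f (x⁻¹ * w) ∂volume := by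
      rw [hpre, withDensity_apply f hA', ← lintegral_indicator hA']
      have hind : ∀ y : ℝ, ((fun y => x * y) ⁻¹' A).indicator f y
          = (A.indicator fun w => f (x⁻¹ * w)) (x * y) := by
        intro y
        by_cases hy : x * y ∈ A
        · rw [Set.indicator_of_mem hy, Set.indicator_of_mem (by exact hy),
            inv_mul_cancel_left₀ hx]
        · rw [Set.indicator_of_notMem hy, Set.indicator_of_notMem (by exact hy)]
      rw [lintegral_congr hind,
        ← lintegral_map hφm (measurable_const_mul x),
        Real.map_volume_mul_left hx, lintegral_smul_measure,
        lintegral_indicator hA, smul_eq_mul]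
    show f x * (volume.withDensity f) (Prod.mk x ⁻¹' S) = _
    rw [hslice, ← mul_assoc]
    exact (lintegral_const_mul' (f x * ENNReal.ofReal |x⁻¹|) _
      (ENNReal.mul_ne_top ENNReal.ofReal_ne_top ENNReal.ofReal_ne_top)).symm
  rw [lintegral_congr_ae hstep]
  -- swap
  have hswap : (∫⁻ x : ℝ, ∫⁻ w in A, f x * ENNReal.ofReal |x⁻¹| * f (x⁻¹ * w) ∂volume ∂volume)
      = ∫⁻ w in A, ∫⁻ x : ℝ, f x * ENNReal.ofReal |x⁻¹| * f (x⁻¹ * w) ∂volume ∂volume := by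
    refine lintegral_lintegral_swap ?_
    refine Measurable.aemeasurable ?_
    exact ((hfm.comp measurable_fst).mul
        ((measurable_fst.inv.abs).ennreal_ofReal)).mul
      (hfm.comp (measurable_fst.inv.mul measurable_snd))
  rw [hswap, withDensity_apply _ hA]
  refine lintegral_congr_ae (ae_restrict_of_ae ?_)
  filter_upwards [hae] with w hw
  exact lintegralD s w hs hw
end

section
/- For all t > 0 and all x ∈ ℝ with x ≠ 0 and |x| ≠ t, (2/π²) ∫₀^∞ ( s/(s² + x²) ) · ( t/(t² + s²) ) ds = (2t/(π² (t² − x²))) · log( t/|x| ). -/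
open Real Set

/-- Explicit form of the density of the iterated Cauchy process
`I_C(t) = C¹(|C²(t)|)`: for `t > 0`, `x ≠ 0`, `|x| ≠ t`,
`(2/π²) ∫₀^∞ (s/(s²+x²)) (t/(t²+s²)) ds = (2t/(π²(t²−x²))) log(t/|x|)`. -/
theorem iterated_cauchy_density_explicit (t x : ℝ) (ht : 0 < t) (hx : x ≠ 0)
    (hxt : |x| ≠ t) :
    (2 / Real.pi ^ 2) *
        ∫ s in Set.Ioi (0 : ℝ), (s / (s ^ 2 + x ^ 2)) * (t / (t ^ 2 + s ^ 2))
      = (2 * t / (Real.pi ^ 2 * (t ^ 2 - x ^ 2))) * Real.log (t / |x|) := by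
  have hx2 : (0:ℝ) < x ^ 2 := by positivity
  have ht2 : (0:ℝ) < t ^ 2 := by positivity
  have hne : t ^ 2 - x ^ 2 ≠ 0 := by
    intro h
    apply hxt
    have hxx : x ^ 2 = t ^ 2 := by linarith
    calc |x| = Real.sqrt (x ^ 2) := (Real.sqrt_sq_eq_abs x).symm
    _ = Real.sqrt (t ^ 2) := by rw [hxx]
    _ = t := Real.sqrt_sq ht.le
  set c : ℝ := t / (2 * (t ^ 2 - x ^ 2)) with hc
  set F : ℝ → ℝ := fun s => c * (Real.log (s ^ 2 + x ^ 2) - Real.log (s ^ 2 + t ^ 2))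
    with hF
  have hpx : ∀ s : ℝ, (0:ℝ) < s ^ 2 + x ^ 2 := fun s => by positivity
  have hpt : ∀ s : ℝ, (0:ℝ) < s ^ 2 + t ^ 2 := fun s => by positivity
  have hderiv : ∀ s ∈ Ioi (0:ℝ),
      HasDerivAt F ((s / (s ^ 2 + x ^ 2)) * (t / (t ^ 2 + s ^ 2))) s := by
    intro s _
    have h1 : HasDerivAt (fun s : ℝ => s ^ 2 + x ^ 2) (2 * s) s := by
      simpa using (hasDerivAt_pow 2 s).add_const (x ^ 2)
    have h2 : HasDerivAt (fun s : ℝ => s ^ 2 + t ^ 2) (2 * s) s := by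
      simpa using (hasDerivAt_pow 2 s).add_const (t ^ 2)
    have l1 : HasDerivAt (fun s : ℝ => Real.log (s ^ 2 + x ^ 2))
        ((s ^ 2 + x ^ 2)⁻¹ * (2 * s)) s := by
      exact ((Real.hasDerivAt_log (hpx s).ne').comp s h1)
    have l2 : HasDerivAt (fun s : ℝ => Real.log (s ^ 2 + t ^ 2))
        ((s ^ 2 + t ^ 2)⁻¹ * (2 * s)) s := by
      exact ((Real.hasDerivAt_log (hpt s).ne').comp s h2)
    have := ((l1.sub l2).const_mul c)
    refine this.congr_deriv ?_
    have e1 := (hpx s).ne'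
    have e2 := (hpt s).ne'
    rw [hc]
    have : t ^ 2 + s ^ 2 = s ^ 2 + t ^ 2 := by ring
    rw [this]
    field_simp
    ring
  have hcont : ContinuousWithinAt F (Ici (0:ℝ)) 0 := by
    apply Continuous.continuousWithinAt
    exact continuous_const.mul
      ((Real.continuousOn_log.comp_continuous (by fun_prop) (fun s => (hpx s).ne')).sub
       (Real.continuousOn_log.comp_continuous (by fun_prop) (fun s => (hpt s).ne')))
  have hnonneg : ∀ s ∈ Ioi (0:ℝ),
      (0:ℝ) ≤ (s / (s ^ 2 + x ^ 2)) * (t / (t ^ 2 + s ^ 2)) := by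
    intro s hs
    have hs' : 0 < s := hs
    positivity
  have htend : Filter.Tendsto F Filter.atTop (nhds 0) := by
    have h1 : Filter.Tendsto (fun s : ℝ => (x ^ 2 - t ^ 2) / (s ^ 2 + t ^ 2))
        Filter.atTop (nhds 0) := by
      apply Filter.Tendsto.div_atTop tendsto_const_nhds
      exact Filter.tendsto_atTop_add_const_right _ _
        (Filter.tendsto_pow_atTop (two_ne_zero))
    have h2 : Filter.Tendsto (fun s : ℝ => (s ^ 2 + x ^ 2) / (s ^ 2 + t ^ 2))
        Filter.atTop (nhds 1) := by
      have : (fun s : ℝ => (s ^ 2 + x ^ 2) / (s ^ 2 + t ^ 2))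
          = fun s => 1 + (x ^ 2 - t ^ 2) / (s ^ 2 + t ^ 2) := by
        funext s
        field_simp
        ring
      rw [this]
      simpa using (tendsto_const_nhds (x := (1:ℝ))).add h1
    have h3 : Filter.Tendsto (fun s : ℝ => Real.log ((s ^ 2 + x ^ 2) / (s ^ 2 + t ^ 2)))
        Filter.atTop (nhds 0) := by
      have := (Real.continuousAt_log one_ne_zero).tendsto.comp h2
      simpa [Function.comp_def] using this
    have h4 : (fun s : ℝ => Real.log (s ^ 2 + x ^ 2) - Real.log (s ^ 2 + t ^ 2))
        = fun s => Real.log ((s ^ 2 + x ^ 2) / (s ^ 2 + t ^ 2)) := by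
      funext s
      rw [Real.log_div (hpx s).ne' (hpt s).ne']
    have : Filter.Tendsto (fun s : ℝ =>
        Real.log (s ^ 2 + x ^ 2) - Real.log (s ^ 2 + t ^ 2)) Filter.atTop (nhds 0) := by
      rw [h4]; exact h3
    simpa using this.const_mul c
  have key := MeasureTheory.integral_Ioi_of_hasDerivAt_of_nonneg hcont hderiv hnonneg htend
  rw [key]
  have hF0 : F 0 = c * (Real.log (x ^ 2) - Real.log (t ^ 2)) := by
    simp [hF]
  rw [hF0]
  have hlx : Real.log (x ^ 2) = 2 * Real.log |x| := by
    rw [← sq_abs x, sq, Real.log_mul (abs_ne_zero.2 hx) (abs_ne_zero.2 hx)]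
    ring
  have hlt : Real.log (t ^ 2) = 2 * Real.log t := by
    rw [sq, Real.log_mul ht.ne' ht.ne']
    ring
  have hltx : Real.log (t / |x|) = Real.log t - Real.log |x| :=
    Real.log_div ht.ne' (abs_ne_zero.2 hx)
  rw [hlx, hlt, hltx, hc]
  have hpi : Real.pi ≠ 0 := Real.pi_ne_zero
  field_simp
  ring
end

section
/- For all t > 0 and all w > 0 with w ≠ t, (4t/π²) ∫₀^∞ ( x/(2t + x²) ) · ( 1/(t x² + 2w²) ) dx = (2t/(π² (w² − t²))) log(w/t). -/
open Real Set

/-- Equality in distribution `C¹(|C²(t)|) ≐ (1/2) C¹(√(2t)) C²(√(2t))` at the level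
of densities: for `t > 0`, `w > 0`, `w ≠ t`,
`(4t/π²) ∫₀^∞ (x/(2t+x²)) (1/(tx²+2w²)) dx = (2t/(π²(w²−t²))) log(w/t)`. -/
theorem half_product_cauchy_density (t w : ℝ) (ht : 0 < t) (hw : 0 < w)
    (hwt : w ≠ t) :
    (4 * t / Real.pi ^ 2) *
        ∫ x in Set.Ioi (0 : ℝ), (x / (2 * t + x ^ 2)) * (1 / (t * x ^ 2 + 2 * w ^ 2))
      = (2 * t / (Real.pi ^ 2 * (w ^ 2 - t ^ 2))) * Real.log (w / t) := by
  have hd : w ^ 2 - t ^ 2 ≠ 0 := by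
    intro h
    apply hwt
    nlinarith
  set g : ℝ → ℝ := fun x =>
    (Real.log (2 * t + x ^ 2) - Real.log (t * x ^ 2 + 2 * w ^ 2)) / (4 * (w ^ 2 - t ^ 2))
    with hg
  have hpos1 : ∀ x : ℝ, 0 < 2 * t + x ^ 2 := fun x => by positivity
  have hpos2 : ∀ x : ℝ, 0 < t * x ^ 2 + 2 * w ^ 2 := fun x => by positivity
  have hderiv : ∀ x ∈ Ioi (0 : ℝ), HasDerivAt g
      ((x / (2 * t + x ^ 2)) * (1 / (t * x ^ 2 + 2 * w ^ 2))) x := by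
    intro x hx
    have d1 : HasDerivAt (fun x : ℝ => 2 * t + x ^ 2) (2 * x) x := by
      simpa using (hasDerivAt_pow 2 x).const_add (2 * t)
    have d2 : HasDerivAt (fun x : ℝ => t * x ^ 2 + 2 * w ^ 2) (t * (2 * x)) x := by
      simpa using (((hasDerivAt_pow 2 x).const_mul t).add_const (2 * w ^ 2))
    have D := ((d1.log (hpos1 x).ne').sub (d2.log (hpos2 x).ne')).div_const
      (4 * (w ^ 2 - t ^ 2))
    refine HasDerivAt.congr_deriv (f := g) D ?_
    field_simp
    ring
  have hcont : ContinuousOn g (Ici (0 : ℝ)) := by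
    apply ContinuousOn.div_const
    apply ContinuousOn.sub
    · exact (Real.continuousOn_log.comp (by fun_prop)
        (fun x _ => (hpos1 x).ne'))
    · exact (Real.continuousOn_log.comp (by fun_prop)
        (fun x _ => (hpos2 x).ne'))
  have hnonneg : ∀ x ∈ Ioi (0 : ℝ),
      0 ≤ (x / (2 * t + x ^ 2)) * (1 / (t * x ^ 2 + 2 * w ^ 2)) := by
    intro x hx
    have : (0:ℝ) < x := hx
    positivity
  have htend : Filter.Tendsto g Filter.atTop
      (nhds ((- Real.log t) / (4 * (w ^ 2 - t ^ 2)))) := by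
    have h1 : ∀ x : ℝ, g x =
        Real.log ((2 * t + x ^ 2) / (t * x ^ 2 + 2 * w ^ 2)) / (4 * (w ^ 2 - t ^ 2)) := by
      intro x
      rw [hg, Real.log_div (hpos1 x).ne' (hpos2 x).ne']
    rw [funext h1]
    apply Filter.Tendsto.div_const
    have h2 : Filter.Tendsto (fun x : ℝ => (2 * t + x ^ 2) / (t * x ^ 2 + 2 * w ^ 2))
        Filter.atTop (nhds (1 / t)) := by
      have h3 : ∀ᶠ x : ℝ in Filter.atTop,
          (2 * t + x ^ 2) / (t * x ^ 2 + 2 * w ^ 2)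
            = (2 * t * (x ^ 2)⁻¹ + 1) / (t + 2 * w ^ 2 * (x ^ 2)⁻¹) := by
        filter_upwards [Filter.eventually_gt_atTop (0:ℝ)] with x hx
        have hx2 : x ^ 2 ≠ 0 := by positivity
        field_simp
      rw [Filter.tendsto_congr' h3]
      have hinv : Filter.Tendsto (fun x : ℝ => (x ^ 2)⁻¹) Filter.atTop (nhds 0) := by
        apply Filter.Tendsto.inv_tendsto_atTop
        exact Filter.tendsto_pow_atTop (by norm_num)
      have := Filter.Tendsto.div
        (((hinv.const_mul (2 * t)).add_const 1))
        ((hinv.const_mul (2 * w ^ 2)).const_add t) (by simpa using ht.ne')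
      simpa [Pi.div_def] using this
    have hlog := (Real.continuousAt_log (by positivity : (1:ℝ)/t ≠ 0)).tendsto.comp h2
    simpa [Real.log_div one_ne_zero ht.ne', Function.comp_def] using hlog
  have hint := MeasureTheory.integral_Ioi_of_hasDerivAt_of_nonneg (hcont.continuousWithinAt Set.self_mem_Ici) hderiv hnonneg htend
  rw [hint]
  have hg0 : g 0 = (Real.log (2 * t) - Real.log (2 * w ^ 2)) / (4 * (w ^ 2 - t ^ 2)) := by
    simp [hg]
  rw [hg0]
  have hlogs : Real.log (2 * w ^ 2) - Real.log (2 * t) - Real.log t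
      = 2 * Real.log (w / t) := by
    rw [Real.log_mul two_ne_zero (by positivity), Real.log_mul two_ne_zero ht.ne',
      Real.log_pow, Real.log_div hw.ne' ht.ne']
    ring
  have hπ : Real.pi ≠ 0 := Real.pi_ne_zero
  rw [div_sub_div_same,
    show -Real.log t - (Real.log (2 * t) - Real.log (2 * w ^ 2)) = 2 * Real.log (w / t) by
      linarith [hlogs]]
  field_simp
end

section
/- Let H ∈ (0,1) and define p(x,t) = 2 ∫₀^∞ ( s/(π(s² + x²)) ) g(s; t^{2H}) ds. Then for all x ≠ 0 and t > 0, p satisfies the non-homogeneous heat equation ∂p/∂t = 2H t^{H−1}/(π x² √(2π)) − H t^{2H−1} ∂²p/∂x². -/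
open Real Set

/-- Density of `I_{CB_H}(t) = C(|B_H(t)|)`, a Cauchy process at a fractional
Brownian time: `p(x,t) = 2 ∫₀^∞ (s/(π(s²+x²))) g(s; t^{2H}) ds`. -/
noncomputable def densCBH (H x t : ℝ) : ℝ :=
  2 * ∫ s in Set.Ioi (0 : ℝ), (s / (Real.pi * (s ^ 2 + x ^ 2))) * gauss s (t ^ (2 * H))

open MeasureTheory

/-- Exponential-integral type function: `E(a) = ∫_a^∞ e^{-w}/w dw`. -/
noncomputable def eInt (a : ℝ) : ℝ := ∫ w in Set.Ioi a, Real.exp (-w) / w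

lemma eInt_integrableOn {a : ℝ} (ha : 0 < a) :
    IntegrableOn (fun w => Real.exp (-w) / w) (Set.Ioi a) := by
  have h1 : IntegrableOn (fun w : ℝ => Real.exp (-1 * w)) (Set.Ioi a) :=
    exp_neg_integrableOn_Ioi a one_pos
  refine Integrable.mono' (h1.const_mul a⁻¹) ?_ ?_
  · exact (((Real.continuous_exp.comp continuous_neg).continuousOn).div
      continuousOn_id fun w hw => ne_of_gt (ha.trans hw)).aestronglyMeasurable
      measurableSet_Ioi
  · filter_upwards [ae_restrict_mem measurableSet_Ioi] with w hw
    have hw' : a < w := hw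
    have h0w : 0 < w := ha.trans hw'
    rw [Real.norm_eq_abs, abs_div, abs_of_pos (Real.exp_pos _), abs_of_pos h0w,
      neg_one_mul, ← div_eq_inv_mul]
    gcongr

lemma hasDerivAt_eInt {a : ℝ} (ha : 0 < a) :
    HasDerivAt eInt (-(Real.exp (-a) / a)) a := by
  set c := a / 2 with hc
  have hca : c < a := by simp only [hc]; linarith
  have hc0 : 0 < c := by simp only [hc]; linarith
  have heq : ∀ b, c < b → eInt b = eInt c - ∫ w in c..b, Real.exp (-w) / w := by
    intro b hb
    have hsplit : Set.Ioc c b ∪ Set.Ioi b = Set.Ioi c := Set.Ioc_union_Ioi_eq_Ioi hb.le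
    have hIoc : IntegrableOn (fun w => Real.exp (-w) / w) (Set.Ioc c b) :=
      (eInt_integrableOn hc0).mono_set fun y hy => hy.1
    have hIoi : IntegrableOn (fun w => Real.exp (-w) / w) (Set.Ioi b) :=
      eInt_integrableOn (hc0.trans hb)
    have hun := setIntegral_union (Set.Ioc_disjoint_Ioi le_rfl) measurableSet_Ioi hIoc hIoi
    rw [hsplit] at hun
    rw [intervalIntegral.integral_of_le hb.le]
    show eInt b = eInt c - ∫ w in Set.Ioc c b, Real.exp (-w) / w
    rw [show eInt c = (∫ w in Set.Ioc c b, Real.exp (-w) / w) + eInt b from hun]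
    ring
  have hmeas : Measurable fun w : ℝ => Real.exp (-w) / w :=
    (Real.measurable_exp.comp measurable_neg).div measurable_id
  have h1 : HasDerivAt (fun b => ∫ w in c..b, Real.exp (-w) / w) (Real.exp (-a) / a) a := by
    refine intervalIntegral.integral_hasDerivAt_right ?_ ?_ ?_
    · exact (intervalIntegrable_iff_integrableOn_Ioc_of_le hca.le).mpr
        ((eInt_integrableOn hc0).mono_set fun y hy => hy.1)
    · exact ⟨Set.univ, Filter.univ_mem, hmeas.aestronglyMeasurable⟩
    · exact ((Real.continuous_exp.comp continuous_neg).continuousAt).div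
        continuousAt_id (ne_of_gt ha)
  have h2 : HasDerivAt (fun b => eInt c - ∫ w in c..b, Real.exp (-w) / w)
      (-(Real.exp (-a) / a)) a := (h1.const_sub (eInt c))
  refine h2.congr_of_eventuallyEq ?_
  filter_upwards [isOpen_Ioi.mem_nhds (show c < a from hca)] with b hb
  exact heq b hb

lemma hasDerivAt_phi {a : ℝ} (ha : 0 < a) :
    HasDerivAt (fun b => Real.exp b * eInt b) (Real.exp a * eInt a - 1 / a) a := by
  have h := (Real.hasDerivAt_exp a).mul (hasDerivAt_eInt ha)
  refine h.congr_deriv ?_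
  have h1 : Real.exp a * Real.exp (-a) = 1 := by
    rw [← Real.exp_add, add_neg_cancel, Real.exp_zero]
  linear_combination (-1 / a) * h1

lemma integral_gauss_cauchy {x v : ℝ} (hx : x ≠ 0) (hv : 0 < v) :
    ∫ s in Set.Ioi (0 : ℝ), (s / (Real.pi * (s ^ 2 + x ^ 2))) * gauss s v
      = Real.exp (x ^ 2 / (2 * v)) * eInt (x ^ 2 / (2 * v))
        / (2 * Real.pi * Real.sqrt (2 * Real.pi * v)) := by
  have hπ : 0 < Real.pi := Real.pi_pos
  have hx2 : 0 < x ^ 2 := by positivity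
  set a : ℝ := x ^ 2 / (2 * v) with ha_def
  have ha : 0 < a := by positivity
  set f : ℝ → ℝ := fun s => (s ^ 2 + x ^ 2) / (2 * v) with hf_def
  have hderiv : ∀ s ∈ Set.Ioi (0 : ℝ), HasDerivWithinAt f (s / v) (Set.Ioi (0 : ℝ)) s := by
    intro s _
    rw [hf_def]
    have h := ((hasDerivAt_pow 2 s).add_const (x ^ 2)).div_const (2 * v)
    refine h.hasDerivWithinAt.congr_deriv ?_
    push_cast
    field_simp
  have hinj : Set.InjOn f (Set.Ioi (0 : ℝ)) := by
    intro s hs r hr hsr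
    have hs0 : (0 : ℝ) < s := hs
    have hr0 : (0 : ℝ) < r := hr
    have h3 : (s ^ 2 + x ^ 2) / (2 * v) = (r ^ 2 + x ^ 2) / (2 * v) := hsr
    field_simp at h3
    exact (pow_left_inj₀ hs0.le hr0.le two_ne_zero).mp (by linarith)
  have himg : f '' Set.Ioi (0 : ℝ) = Set.Ioi a := by
    ext w
    constructor
    · rintro ⟨s, hs, rfl⟩
      have hs0 : (0 : ℝ) < s := hs
      show a < (s ^ 2 + x ^ 2) / (2 * v)
      rw [ha_def]
      gcongr
      nlinarith
    · intro hw
      have hw' : a < w := hw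
      have hpos : 0 < 2 * v * w - x ^ 2 := by
        have h5 : x ^ 2 < 2 * v * w := by
          calc x ^ 2 = (x ^ 2 / (2 * v)) * (2 * v) := by field_simp
          _ < w * (2 * v) := by gcongr ?_ * (2*v)
          _ = 2 * v * w := by ring
        linarith
      refine ⟨Real.sqrt (2 * v * w - x ^ 2), Real.sqrt_pos.mpr hpos, ?_⟩
      show (Real.sqrt (2 * v * w - x ^ 2) ^ 2 + x ^ 2) / (2 * v) = w
      rw [Real.sq_sqrt hpos.le]
      field_simp
      ring
  have key := MeasureTheory.integral_image_eq_integral_abs_deriv_smul measurableSet_Ioi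
    hderiv hinj (fun w => Real.exp (-w) / w)
  rw [himg] at key
  have hEq : Set.EqOn (fun s => (s / (Real.pi * (s ^ 2 + x ^ 2))) * gauss s v)
      (fun s => (Real.exp a / (2 * Real.pi * Real.sqrt (2 * Real.pi * v)))
        * (|s / v| • (Real.exp (-(f s)) / f s))) (Set.Ioi (0 : ℝ)) := by
    intro s hs
    have hs0 : (0 : ℝ) < s := hs
    have hsx : (0 : ℝ) < s ^ 2 + x ^ 2 := by positivity
    have hsqrt : 0 < Real.sqrt (2 * Real.pi * v) := Real.sqrt_pos.mpr (by positivity)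
    have habs : |s / v| = s / v := abs_of_pos (div_pos hs0 hv)
    have hexp2 : Real.exp a * Real.exp (-(f s)) = Real.exp (-s ^ 2 / (2 * v)) := by
      rw [← Real.exp_add, hf_def, ha_def]
      congr 1
      ring
    show (s / (Real.pi * (s ^ 2 + x ^ 2))) * gauss s v
      = (Real.exp a / (2 * Real.pi * Real.sqrt (2 * Real.pi * v)))
        * (|s / v| • (Real.exp (-(f s)) / f s))
    have goal_eq : ∀ F E eA R' : ℝ, eA / (2 * Real.pi * R') * ((s / v) * (E / F))
        = (eA * E) * (s / (2 * Real.pi * R' * v * F)) := by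
      intros; ring
    rw [smul_eq_mul, habs,
      goal_eq (f s) (Real.exp (-(f s))) (Real.exp a) (Real.sqrt (2 * Real.pi * v)),
      hexp2, gauss]
    simp only [hf_def]
    set R := Real.sqrt (2 * Real.pi * v) with hR_def
    have hR : 0 < R := hsqrt
    have hden : 2 * Real.pi * R * v * ((s ^ 2 + x ^ 2) / (2 * v))
        = Real.pi * R * (s ^ 2 + x ^ 2) := by
      field_simp [hv.ne']
    rw [hden]
    have final : ∀ E R' P : ℝ, s / (Real.pi * P) * (R'⁻¹ * E)
        = E * (s / (Real.pi * R' * P)) := by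
      intros; ring
    exact final (Real.exp (-s ^ 2 / (2 * v))) R (s ^ 2 + x ^ 2)
  rw [MeasureTheory.setIntegral_congr_fun measurableSet_Ioi hEq,
    MeasureTheory.integral_const_mul, ← key]
  show Real.exp a / (2 * Real.pi * Real.sqrt (2 * Real.pi * v)) * eInt a
    = Real.exp a * eInt a / (2 * Real.pi * Real.sqrt (2 * Real.pi * v))
  ring

/-- `φ(b) = e^b E(b)`. -/
noncomputable def phiE (b : ℝ) : ℝ := Real.exp b * eInt b

lemma hasDerivAt_phiE {a : ℝ} (ha : 0 < a) :
    HasDerivAt phiE (phiE a - 1 / a) a := hasDerivAt_phi ha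

lemma densCBH_eq {H x t : ℝ} (hx : x ≠ 0) (ht : 0 < t) :
    densCBH H x t = phiE (x ^ 2 / (2 * t ^ (2 * H)))
      / (Real.pi * Real.sqrt (2 * Real.pi * t ^ (2 * H))) := by
  have hπ : 0 < Real.pi := Real.pi_pos
  have hv : (0:ℝ) < t ^ (2 * H) := Real.rpow_pos_of_pos ht _
  have hsq : 0 < Real.sqrt (2 * Real.pi * t ^ (2 * H)) := Real.sqrt_pos.mpr (by positivity)
  rw [densCBH, integral_gauss_cauchy hx hv, phiE]
  field_simp

lemma sqrt_two_pi_rpow {H t : ℝ} (ht : 0 < t) :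
    Real.sqrt (2 * Real.pi * t ^ (2 * H)) = Real.sqrt (2 * Real.pi) * t ^ H := by
  have hπ : 0 < Real.pi := Real.pi_pos
  rw [Real.sqrt_mul (by positivity : (0:ℝ) ≤ 2 * Real.pi)]
  congr 1
  rw [show (2 * H) = H * 2 by ring, Real.rpow_mul ht.le, Real.rpow_two]
  exact Real.sqrt_sq (Real.rpow_nonneg ht.le H)

/-- For `H ∈ (0,1)`, `x ≠ 0`, `t > 0`, the density of `C(|B_H(t)|)` satisfies the
non-homogeneous heat equation
`∂p/∂t = 2H t^{H−1}/(π x² √(2π)) − H t^{2H−1} ∂²p/∂x²`. -/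
theorem densCBH_heat_equation (H : ℝ) (hH : H ∈ Set.Ioo (0 : ℝ) 1)
    (x t : ℝ) (hx : x ≠ 0) (ht : 0 < t) :
    deriv (fun τ => densCBH H x τ) t
      = 2 * H * t ^ (H - 1) / (Real.pi * x ^ 2 * Real.sqrt (2 * Real.pi))
        - H * t ^ (2 * H - 1) * deriv (deriv (fun y => densCBH H y t)) x := by
  have hπ : 0 < Real.pi := Real.pi_pos
  have hs2π : 0 < Real.sqrt (2 * Real.pi) := Real.sqrt_pos.mpr (by positivity)
  have hx2 : 0 < x ^ 2 := by positivity
  have hv : (0:ℝ) < t ^ (2 * H) := Real.rpow_pos_of_pos ht _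
  have huH : (0:ℝ) < t ^ H := Real.rpow_pos_of_pos ht _
  have hA : (0:ℝ) < x ^ 2 / (2 * t ^ (2 * H)) := by positivity
  set c1 : ℝ := (Real.pi * Real.sqrt (2 * Real.pi))⁻¹ with hc1_def
  have hc1 : 0 < c1 := by rw [hc1_def]; positivity
  -- closed form as a function of time
  have hval_t : ∀ τ : ℝ, 0 < τ → densCBH H x τ
      = phiE ((x ^ 2 / 2) * τ ^ (-(2 * H))) * c1 * τ ^ (-H) := by
    intro τ hτ
    have hvτ : (0:ℝ) < τ ^ (2 * H) := Real.rpow_pos_of_pos hτ _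
    have hτH : (0:ℝ) < τ ^ H := Real.rpow_pos_of_pos hτ _
    rw [densCBH_eq hx hτ, sqrt_two_pi_rpow hτ]
    have h1 : x ^ 2 / (2 * τ ^ (2 * H)) = (x ^ 2 / 2) * τ ^ (-(2 * H)) := by
      rw [Real.rpow_neg hτ.le]; ring
    rw [h1, Real.rpow_neg hτ.le H, hc1_def]
    field_simp
  -- derivative in time
  have hA_eq : (x ^ 2 / 2) * t ^ (-(2 * H)) = x ^ 2 / (2 * t ^ (2 * H)) := by
    rw [Real.rpow_neg ht.le]; ring
  have inner_t : HasDerivAt (fun τ : ℝ => (x ^ 2 / 2) * τ ^ (-(2 * H)))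
      ((x ^ 2 / 2) * (-(2 * H) * t ^ (-(2 * H) - 1))) t :=
    (Real.hasDerivAt_rpow_const (Or.inl ht.ne')).const_mul (x ^ 2 / 2)
  have houter : HasDerivAt phiE
      (phiE (x ^ 2 / (2 * t ^ (2 * H))) - 1 / (x ^ 2 / (2 * t ^ (2 * H))))
      ((x ^ 2 / 2) * t ^ (-(2 * H))) := by
    rw [hA_eq]; exact hasDerivAt_phiE hA
  have hφt := houter.comp t inner_t
  have houter2 : HasDerivAt (fun τ : ℝ => τ ^ (-H)) (-H * t ^ (-H - 1)) t :=
    Real.hasDerivAt_rpow_const (Or.inl ht.ne')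
  have hG := (hφt.mul_const c1).mul houter2
  have hev : (fun τ => densCBH H x τ)
      =ᶠ[nhds t] (fun τ => phiE ((x ^ 2 / 2) * τ ^ (-(2 * H))) * c1 * τ ^ (-H)) := by
    filter_upwards [isOpen_Ioi.mem_nhds ht] with τ hτ using hval_t τ hτ
  have hd1 : deriv (fun τ => densCBH H x τ) t
      = ((phiE (x ^ 2 / (2 * t ^ (2 * H))) - 1 / (x ^ 2 / (2 * t ^ (2 * H))))
          * ((x ^ 2 / 2) * (-(2 * H) * t ^ (-(2 * H) - 1))) * c1) * t ^ (-H)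
        + phiE ((x ^ 2 / 2) * t ^ (-(2 * H))) * c1 * (-H * t ^ (-H - 1)) := by
    rw [hev.deriv_eq]
    exact hG.deriv
  -- first derivative in space, on a punctured neighborhood
  set c2 : ℝ := (Real.pi * Real.sqrt (2 * Real.pi * t ^ (2 * H)))⁻¹ with hc2_def
  have hval_x : ∀ y : ℝ, y ≠ 0 → densCBH H y t
      = phiE (y ^ 2 / (2 * t ^ (2 * H))) * c2 := by
    intro y hy
    rw [densCBH_eq hy ht, div_eq_mul_inv, hc2_def]
  have hd_x : ∀ y : ℝ, y ≠ 0 → HasDerivAt (fun z => densCBH H z t)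
      ((phiE (y ^ 2 / (2 * t ^ (2 * H))) - 1 / (y ^ 2 / (2 * t ^ (2 * H))))
        * (y / t ^ (2 * H)) * c2) y := by
    intro y hy
    have hAy : (0:ℝ) < y ^ 2 / (2 * t ^ (2 * H)) := by positivity
    have hin : HasDerivAt (fun z : ℝ => z ^ 2 / (2 * t ^ (2 * H)))
        (y / t ^ (2 * H)) y := by
      have h := (hasDerivAt_pow 2 y).div_const (2 * t ^ (2 * H))
      refine h.congr_deriv ?_
      push_cast
      field_simp
    have hcomp := ((hasDerivAt_phiE hAy).comp y hin).mul_const c2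
    refine hcomp.congr_of_eventuallyEq ?_
    filter_upwards [isOpen_compl_singleton.mem_nhds hy] with z hz
    exact hval_x z hz
  have hderiv1_eq : deriv (fun z => densCBH H z t)
      =ᶠ[nhds x] (fun y => (phiE (y ^ 2 / (2 * t ^ (2 * H)))
          - 1 / (y ^ 2 / (2 * t ^ (2 * H)))) * (y / t ^ (2 * H)) * c2) := by
    filter_upwards [isOpen_compl_singleton.mem_nhds hx] with y hy
    exact (hd_x y hy).deriv
  -- second derivative in space
  have hφx : HasDerivAt (fun y : ℝ => phiE (y ^ 2 / (2 * t ^ (2 * H))))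
      ((phiE (x ^ 2 / (2 * t ^ (2 * H))) - 1 / (x ^ 2 / (2 * t ^ (2 * H))))
        * (x / t ^ (2 * H))) x := by
    have hin : HasDerivAt (fun z : ℝ => z ^ 2 / (2 * t ^ (2 * H)))
        (x / t ^ (2 * H)) x := by
      have h := (hasDerivAt_pow 2 x).div_const (2 * t ^ (2 * H))
      refine h.congr_deriv ?_
      push_cast
      field_simp
    exact (hasDerivAt_phiE hA).comp x hin
  have hq : HasDerivAt (fun y : ℝ => 1 / (y ^ 2 / (2 * t ^ (2 * H))))
      ((0 * (x ^ 2 / (2 * t ^ (2 * H)))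
        - 1 * (x / t ^ (2 * H))) / (x ^ 2 / (2 * t ^ (2 * H))) ^ 2) x := by
    have hin : HasDerivAt (fun z : ℝ => z ^ 2 / (2 * t ^ (2 * H)))
        (x / t ^ (2 * H)) x := by
      have h := (hasDerivAt_pow 2 x).div_const (2 * t ^ (2 * H))
      refine h.congr_deriv ?_
      push_cast
      field_simp
    exact (hasDerivAt_const x (1:ℝ)).div hin hA.ne'
  have hlin : HasDerivAt (fun y : ℝ => y / t ^ (2 * H)) (1 / t ^ (2 * H)) x := by
    have h := (hasDerivAt_id x).div_const (t ^ (2 * H))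
    simpa using h
  have hD1 := ((hφx.sub hq).mul hlin).mul_const c2
  have hsecond : deriv (deriv (fun y => densCBH H y t)) x
      = (((phiE (x ^ 2 / (2 * t ^ (2 * H))) - 1 / (x ^ 2 / (2 * t ^ (2 * H))))
            * (x / t ^ (2 * H))
          - (0 * (x ^ 2 / (2 * t ^ (2 * H))) - 1 * (x / t ^ (2 * H)))
              / (x ^ 2 / (2 * t ^ (2 * H))) ^ 2) * (x / t ^ (2 * H))
        + (phiE (x ^ 2 / (2 * t ^ (2 * H))) - 1 / (x ^ 2 / (2 * t ^ (2 * H))))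
            * (1 / t ^ (2 * H))) * c2 := by
    rw [hderiv1_eq.deriv_eq]
    exact hD1.deriv
  -- put everything together
  rw [hd1, hsecond, hA_eq]
  -- express all rpow's through u = t ^ H
  have e1 : t ^ (-H) = (t ^ H)⁻¹ := Real.rpow_neg ht.le H
  have e2 : t ^ (H - 1) = t ^ H / t := by
    rw [Real.rpow_sub ht, Real.rpow_one]
  have e3 : t ^ (-(2 * H) - 1) = ((t ^ H) ^ 2 * t)⁻¹ := by
    rw [show -(2 * H) - 1 = -(H * 2 + 1) by ring, Real.rpow_neg ht.le,
      Real.rpow_add ht, Real.rpow_one, Real.rpow_mul ht.le, Real.rpow_two]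
  have e4 : t ^ (-H - 1) = (t ^ H * t)⁻¹ := by
    rw [show -H - 1 = -(H + 1) by ring, Real.rpow_neg ht.le,
      Real.rpow_add ht, Real.rpow_one]
  have e5 : t ^ (2 * H) = (t ^ H) ^ 2 := by
    rw [show (2 * H) = H * 2 by ring, Real.rpow_mul ht.le, Real.rpow_two]
  have e6 : t ^ (2 * H - 1) = (t ^ H) ^ 2 * t⁻¹ := by
    rw [show 2 * H - 1 = H * 2 + (-1) by ring, Real.rpow_add ht,
      Real.rpow_mul ht.le, Real.rpow_two, Real.rpow_neg_one]
  rw [hc2_def, sqrt_two_pi_rpow ht, hc1_def]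
  rw [e1, e2, e3, e4, e5, e6]
  set u : ℝ := t ^ H with hu_def
  set P : ℝ := phiE (x ^ 2 / (2 * u ^ 2)) with hP_def
  have hu : 0 < u := huH
  field_simp
  ring
end
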